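/- arXiv:2505.18967 — 6 statements merged into one kernel-verified Lean document; each statement's English description precedes it below -/
import Mathlib

section
/- Let S be a finite set of primes with 2 ∈ S, let k and f be positive integers divisible by no prime of S (in particular k is odd), and let m ∈ ℤ. Then Kl^S_{k,f}(m) = ∏_{p prime, p ∣ kf} Kl_p(v_p(k), v_p(f); m), where v_p denotes the p-adic valuation. -/
/-!
The summand of `KlS k f m` depends only on `a` modulo `k f²`, and when `k₁ f₁²` and `k₂ f₂²` are
coprime the summand for `(k₁ k₂, f₁ f₂)` is the product of the summands for `(k₁, f₁)` and
`(k₂, f₂)`: the divisibility condition splits by coprimality, the Jacobi symbol is multiplicative in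
its modulus, and the extra factor `f₂²` (resp. `f₁²`) is a square coprime to `k₁` (resp. `k₂`).
The Chinese remainder theorem turns this into multiplicativity of `KlS`, and splitting `k` and `f`
into prime powers yields the local factors `Klp p (v_p k) (v_p f) m = KlS (p ^ v_p k) (p ^ v_p f) m`.
-/

/-- The local generalized Kloosterman sum
`Kl_p(u,v;m) = Σ_{a mod p^{u+2v}, p^{2v} ∣ a²−4m} ((a²−4m)/p^{2v} | p^u)`,
where `(· | ·)` is the Jacobi symbol. -/
noncomputable def Klp (p u v : ℕ) (m : ℤ) : ℤ :=
  ∑ a ∈ Finset.range (p ^ (u + 2*v)),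
    if ((p:ℤ) ^ (2*v) ∣ ((a:ℤ)^2 - 4*m)) then
      jacobiSym (((a:ℤ)^2 - 4*m) / (p:ℤ) ^ (2*v)) (p ^ u)
    else 0

/-- The generalized Kloosterman sum at frequency `0`:
`Kl^S_{k,f}(m) = Σ_{a mod kf², f² ∣ a²−4m} ((a²−4m)/f² | k)`. -/
noncomputable def KlS (k f : ℕ) (m : ℤ) : ℤ :=
  ∑ a ∈ Finset.range (k * f^2),
    if ((f:ℤ)^2 ∣ ((a:ℤ)^2 - 4*m)) then
      jacobiSym (((a:ℤ)^2 - 4*m) / (f:ℤ)^2) k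
    else 0

open Finset Function

theorem Finset.sum_range_eq_sum_zmod_val {R : Type*} [AddCommMonoid R] (N : ℕ) [NeZero N]
    (g : ℕ → R) : ∑ a ∈ range N, g a = ∑ x : ZMod N, g x.val := by
  refine Finset.sum_nbij' (fun a => (a : ZMod N)) ZMod.val (by simp) (by simp [ZMod.val_lt])
    (fun a ha => ZMod.val_cast_of_lt (mem_range.mp ha)) (fun x _ => ZMod.natCast_zmod_val x) ?_
  intro a ha
  rw [ZMod.val_cast_of_lt (mem_range.mp ha)]

theorem ZMod.chineseRemainder_fst_val {M N : ℕ} [NeZero M] [NeZero N] (h : M.Coprime N)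
    (x : ZMod (M * N)) :
    (ZMod.chineseRemainder h x).1.val = x.val % M := by
  change (ZMod.cast x : ZMod M × ZMod N).1.val = _
  rw [Prod.fst_zmod_cast, ZMod.cast_eq_val, ZMod.val_natCast]

theorem ZMod.chineseRemainder_snd_val {M N : ℕ} [NeZero M] [NeZero N] (h : M.Coprime N)
    (x : ZMod (M * N)) :
    (ZMod.chineseRemainder h x).2.val = x.val % N := by
  change (ZMod.cast x : ZMod M × ZMod N).2.val = _
  rw [Prod.snd_zmod_cast, ZMod.cast_eq_val, ZMod.val_natCast]

theorem Finset.sum_range_mul_mul_eq_mul_of_periodic {R : Type*} [CommSemiring R] {M N : ℕ}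
    [NeZero M] [NeZero N] (h : M.Coprime N) {g₁ g₂ : ℕ → R} (h₁ : Periodic g₁ M)
    (h₂ : Periodic g₂ N) :
    ∑ a ∈ range (M * N), g₁ a * g₂ a = (∑ a ∈ range M, g₁ a) * ∑ a ∈ range N, g₂ a := by
  simp only [sum_range_eq_sum_zmod_val, Fintype.sum_mul_sum, ← Fintype.sum_prod_type']
  refine Fintype.sum_equiv (ZMod.chineseRemainder h).toEquiv _ _ fun x => ?_
  simp only [RingEquiv.toEquiv_eq_coe, EquivLike.coe_coe, ZMod.chineseRemainder_fst_val,
    ZMod.chineseRemainder_snd_val, h₁.map_mod_nat, h₂.map_mod_nat]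

theorem Nat.prod_pow_factorization_of_primeFactors_subset {n : ℕ} {s : Finset ℕ} (hn : n ≠ 0)
    (hs : n.primeFactors ⊆ s) : ∏ p ∈ s, p ^ n.factorization p = n := by
  rw [← Finsupp.prod_of_support_subset _ (by rwa [Nat.support_factorization]) _
    (fun _ _ => pow_zero _), Nat.prod_factorization_pow_eq_self hn]

theorem jacobiSym.sq_mul_of_coprime {a b : ℕ} (h : a.Coprime b) (t : ℤ) :
    jacobiSym ((a : ℤ) ^ 2 * t) b = jacobiSym t b := by
  rw [jacobiSym.mul_left, jacobiSym.sq_one' (by rwa [Int.gcd_natCast_natCast]), one_mul]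

noncomputable def klSummand (k f : ℕ) (m a : ℤ) : ℤ :=
  if (f : ℤ) ^ 2 ∣ a ^ 2 - 4 * m then jacobiSym ((a ^ 2 - 4 * m) / (f : ℤ) ^ 2) k else 0

theorem KlS_eq_sum_klSummand (k f : ℕ) (m : ℤ) :
    KlS k f m = ∑ a ∈ range (k * f ^ 2), klSummand k f m a := rfl

theorem Klp_eq_KlS (p u v : ℕ) (m : ℤ) : Klp p u v m = KlS (p ^ u) (p ^ v) m := by
  simp only [Klp, KlS, Nat.cast_pow, ← pow_mul, ← pow_add, mul_comm v 2]

theorem klSummand_periodic (k f : ℕ) (m : ℤ) : Periodic (klSummand k f m) (k * f ^ 2 : ℤ) := by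
  intro a
  rcases eq_or_ne f 0 with rfl | hf
  · simp
  have hf2 : (f : ℤ) ^ 2 ≠ 0 := by positivity
  have key : (a + k * f ^ 2) ^ 2 - 4 * m = (a ^ 2 - 4 * m) + k * (2 * a + k * f ^ 2) * f ^ 2 := by
    ring
  simp only [klSummand, key, dvd_add_left (dvd_mul_left ((f : ℤ) ^ 2) _)]
  split_ifs
  · rw [Int.add_mul_ediv_right _ _ hf2]
    exact jacobiSym.mod_left' (Int.add_mul_emod_self_left _ _ _)
  · rfl

theorem klSummand_mul {k₁ f₁ k₂ f₂ : ℕ} (hk₁ : k₁ ≠ 0) (hk₂ : k₂ ≠ 0) (hf₁ : f₁ ≠ 0)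
    (hf₂ : f₂ ≠ 0) (hf : f₁.Coprime f₂) (hf₂k₁ : f₂.Coprime k₁) (hf₁k₂ : f₁.Coprime k₂)
    (m a : ℤ) :
    klSummand (k₁ * k₂) (f₁ * f₂) m a = klSummand k₁ f₁ m a * klSummand k₂ f₂ m a := by
  have hco : IsCoprime ((f₁ : ℤ) ^ 2) ((f₂ : ℤ) ^ 2) := (Nat.isCoprime_iff_coprime.mpr hf).pow
  have hcast : ((f₁ * f₂ : ℕ) : ℤ) ^ 2 = (f₁ : ℤ) ^ 2 * (f₂ : ℤ) ^ 2 := by push_cast; ring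
  unfold klSummand
  rw [hcast]
  by_cases h₁ : (f₁ : ℤ) ^ 2 ∣ a ^ 2 - 4 * m
  · by_cases h₂ : (f₂ : ℤ) ^ 2 ∣ a ^ 2 - 4 * m
    · -- with `a² - 4m = f₁² f₂² t` the three quotients are `t`, `f₂² t` and `f₁² t`
      obtain ⟨t, ht⟩ := hco.mul_dvd h₁ h₂
      have hf₁' : (f₁ : ℤ) ^ 2 ≠ 0 := by positivity
      have hf₂' : (f₂ : ℤ) ^ 2 ≠ 0 := by positivity
      rw [if_pos (hco.mul_dvd h₁ h₂), if_pos h₁, if_pos h₂, ht,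
        Int.mul_ediv_cancel_left _ (mul_ne_zero hf₁' hf₂'), mul_assoc,
        Int.mul_ediv_cancel_left _ hf₁', mul_left_comm, Int.mul_ediv_cancel_left _ hf₂',
        jacobiSym.sq_mul_of_coprime hf₂k₁, jacobiSym.sq_mul_of_coprime hf₁k₂,
        jacobiSym.mul_right' _ hk₁ hk₂]
    · rw [if_neg h₂, if_neg fun h => h₂ ((dvd_mul_left _ _).trans h), mul_zero]
  · rw [if_neg h₁, if_neg fun h => h₁ ((dvd_mul_right _ _).trans h), zero_mul]

theorem KlS_mul {k₁ f₁ k₂ f₂ : ℕ} (hk₁ : k₁ ≠ 0) (hk₂ : k₂ ≠ 0) (hf₁ : f₁ ≠ 0) (hf₂ : f₂ ≠ 0)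
    (h : (k₁ * f₁ ^ 2).Coprime (k₂ * f₂ ^ 2)) (m : ℤ) :
    KlS (k₁ * k₂) (f₁ * f₂) m = KlS k₁ f₁ m * KlS k₂ f₂ m := by
  have : NeZero (k₁ * f₁ ^ 2) := ⟨by positivity⟩
  have : NeZero (k₂ * f₂ ^ 2) := ⟨by positivity⟩
  have hdvd₁ : f₁ ∣ k₁ * f₁ ^ 2 := (dvd_pow_self f₁ two_ne_zero).mul_left k₁
  have hdvd₂ : f₂ ∣ k₂ * f₂ ^ 2 := (dvd_pow_self f₂ two_ne_zero).mul_left k₂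
  have hf : f₁.Coprime f₂ := (h.coprime_dvd_left hdvd₁).coprime_dvd_right hdvd₂
  have hf₂k₁ : f₂.Coprime k₁ :=
    ((h.coprime_dvd_left (dvd_mul_right k₁ _)).coprime_dvd_right hdvd₂).symm
  have hf₁k₂ : f₁.Coprime k₂ := (h.coprime_dvd_left hdvd₁).coprime_dvd_right (dvd_mul_right k₂ _)
  have periodic_nat (k f : ℕ) : Periodic (fun a : ℕ => klSummand k f m a) (k * f ^ 2) :=
    fun a => by simpa using klSummand_periodic k f m a
  rw [KlS_eq_sum_klSummand, KlS_eq_sum_klSummand, KlS_eq_sum_klSummand,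
    show k₁ * k₂ * (f₁ * f₂) ^ 2 = k₁ * f₁ ^ 2 * (k₂ * f₂ ^ 2) by ring]
  simp only [klSummand_mul hk₁ hk₂ hf₁ hf₂ hf hf₂k₁ hf₁k₂]
  exact sum_range_mul_mul_eq_mul_of_periodic h (periodic_nat k₁ f₁) (periodic_nat k₂ f₂)

theorem KlS_prod {ι : Type*} (s : Finset ι) {k f : ι → ℕ} (hk : ∀ i ∈ s, k i ≠ 0)
    (hf : ∀ i ∈ s, f i ≠ 0)
    (hs : (s : Set ι).Pairwise fun i j => (k i * f i ^ 2).Coprime (k j * f j ^ 2)) (m : ℤ) :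
    KlS (∏ i ∈ s, k i) (∏ i ∈ s, f i) m = ∏ i ∈ s, KlS (k i) (f i) m := by
  classical
  induction s using Finset.induction_on with
  | empty => simp [KlS]
  | insert i s hi ih =>
    simp only [Finset.forall_mem_insert] at hk hf
    rw [Finset.coe_insert, Set.pairwise_insert_of_notMem (by exact_mod_cast hi)] at hs
    have hcop : (k i * f i ^ 2).Coprime ((∏ j ∈ s, k j) * (∏ j ∈ s, f j) ^ 2) := by
      rw [← Finset.prod_pow, ← Finset.prod_mul_distrib]
      exact Nat.Coprime.prod_right fun j hj => (hs.2 j hj).1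
    rw [prod_insert hi, prod_insert hi, prod_insert hi,
      KlS_mul hk.1 (prod_ne_zero_iff.mpr hk.2) hf.1 (prod_ne_zero_iff.mpr hf.2) hcop,
      ih hk.2 hf.2 hs.1]

theorem stmt6_general (k f : ℕ) (hk : 0 < k) (hf : 0 < f) (m : ℤ) :
    KlS k f m =
      ∏ p ∈ (k * f).primeFactors, Klp p (k.factorization p) (f.factorization p) m := by
  set P := (k * f).primeFactors
  have hP : ∀ p ∈ P, p.Prime := fun p => Nat.prime_of_mem_primeFactors
  calc KlS k f m = KlS (∏ p ∈ P, p ^ k.factorization p) (∏ p ∈ P, p ^ f.factorization p) m := by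
        rw [Nat.prod_pow_factorization_of_primeFactors_subset hk.ne'
            (Nat.primeFactors_mono (dvd_mul_right k f) (by positivity)),
          Nat.prod_pow_factorization_of_primeFactors_subset hf.ne'
            (Nat.primeFactors_mono (dvd_mul_left f k) (by positivity))]
    _ = ∏ p ∈ P, KlS (p ^ k.factorization p) (p ^ f.factorization p) m := by
        refine KlS_prod P (fun p hp => pow_ne_zero _ (hP p hp).ne_zero)
          (fun p hp => pow_ne_zero _ (hP p hp).ne_zero) (fun p hp q hq hpq => ?_) m
        beta_reduce
        rw [← pow_mul, ← pow_add, ← pow_mul, ← pow_add]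
        exact Nat.Coprime.pow _ _ ((Nat.coprime_primes (hP p hp) (hP q hq)).mpr hpq)
    _ = _ := by simp only [Klp_eq_KlS]

theorem stmt6 (S : Finset ℕ) (hS : ∀ q ∈ S, Nat.Prime q) (h2 : 2 ∈ S)
    (k f : ℕ) (hk : 0 < k) (hf : 0 < f)
    (hkS : ∀ q ∈ S, ¬ q ∣ k) (hfS : ∀ q ∈ S, ¬ q ∣ f) (m : ℤ) :
    KlS k f m =
      ∏ p ∈ (k * f).primeFactors, Klp p (k.factorization p) (f.factorization p) m :=
  stmt6_general k f hk hf m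
end

section
/- Let q_1, …, q_r be distinct primes. For every point (x, y_1, …, y_r) ∈ ℝ × ℚ_{q_1} × ⋯ × ℚ_{q_r} there exists a unique rational number m ∈ ℤ^S such that x − m ∈ [0, 1) and ‖y_i − m‖_{q_i} ≤ 1 for every i = 1, …, r (where m is viewed in ℚ_{q_i} via the canonical embedding ℚ → ℚ_{q_i}). Equivalently, [0,1) × ℤ_{q_1} × ⋯ × ℤ_{q_r} is a fundamental domain for the additive action on ℚ_S of the diagonally embedded ℤ^S. -/
/-!
Each `y_i` is approximated, up to a `q_i`-adic integer, by a rational `s_i` whose denominator is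
a power of `q_i`. The sum `m₀ = ∑ s_i` is an `S`-integer, and `y_i - m₀` is `q_i`-integral because
every `s_j` with `j ≠ i` is. Adding the integer `⌊x - m₀⌋` corrects the real coordinate without
spoiling the `q_i`-adic ones. Two solutions differ by a rational that is integral at every prime,
hence by an integer, and the real coordinate forces that integer to vanish.
-/

def sIntegers (S : Set ℕ) : Subring ℚ where
  carrier := {m | ∀ p : ℕ, p.Prime → p ∉ S → padicNorm p m ≤ 1}
  mul_mem' {a b} ha hb p hp hpS := by
    have := Fact.mk hp
    rw [padicNorm.mul]
    exact mul_le_one₀ (ha p hp hpS) (padicNorm.nonneg _) (hb p hp hpS)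
  one_mem' p hp _ := by simp
  add_mem' {a b} ha hb p hp hpS := by
    have := Fact.mk hp
    exact padicNorm.nonarchimedean.trans (max_le (ha p hp hpS) (hb p hp hpS))
  zero_mem' p _ _ := by simp
  neg_mem' {a} ha p hp hpS := by
    rw [padicNorm.neg]
    exact ha p hp hpS

theorem mem_sIntegers {S : Set ℕ} {m : ℚ} :
    m ∈ sIntegers S ↔ ∀ p : ℕ, p.Prime → p ∉ S → padicNorm p m ≤ 1 :=
  Iff.rfl

theorem mem_sIntegers_range {ι : Type*} {q : ι → ℕ} {m : ℚ} :
    m ∈ sIntegers (Set.range q) ↔ ∀ p : ℕ, p.Prime → (∀ i, q i ≠ p) → padicNorm p m ≤ 1 := by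
  simp [mem_sIntegers]

theorem sIntegers_mono {S T : Set ℕ} (h : S ⊆ T) : sIntegers S ≤ sIntegers T :=
  fun _ hm p hp hpT => hm p hp fun hpS => hpT (h hpS)

theorem Padic.norm_ratCast_le_one_iff {p : ℕ} [Fact p.Prime] {m : ℚ} :
    ‖(m : ℚ_[p])‖ ≤ 1 ↔ padicNorm p m ≤ 1 := by
  rw [Padic.eq_padicNorm]
  exact_mod_cast Iff.rfl

theorem norm_le_one_of_mem_sIntegers {S : Set ℕ} {m : ℚ} (hm : m ∈ sIntegers S) {p : ℕ}
    [hp : Fact p.Prime] (hpS : p ∉ S) : ‖(m : ℚ_[p])‖ ≤ 1 :=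
  Padic.norm_ratCast_le_one_iff.2 (hm p hp.out hpS)

theorem sIntegers_empty : sIntegers ∅ = ⊥ := by
  refine le_antisymm (fun d hd => ?_) bot_le
  have hden : d.den = 1 := Nat.eq_one_iff_not_exists_prime_dvd.2 fun p hp => by
    have := Fact.mk hp
    have hunit := PadicInt.isUnit_den d (norm_le_one_of_mem_sIntegers hd (Set.notMem_empty p))
    rw [PadicInt.isUnit_iff, PadicInt.norm_natCast_eq_one_iff] at hunit
    exact (Nat.Prime.coprime_iff_not_dvd hp).1 hunit
  exact Subring.mem_bot.2 ⟨d.num, (Rat.den_eq_one_iff d).1 hden⟩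

theorem mem_sIntegers_empty_of_norm_le_one {ι : Type*} {q : ι → ℕ} [∀ i, Fact (q i).Prime]
    {d : ℚ} (hd : d ∈ sIntegers (Set.range q)) (hq : ∀ i, ‖(d : ℚ_[q i])‖ ≤ 1) :
    d ∈ sIntegers ∅ := by
  intro p hp _
  by_cases hpq : p ∈ Set.range q
  · obtain ⟨i, rfl⟩ := hpq
    exact Padic.norm_ratCast_le_one_iff.1 (hq i)
  · exact hd p hp hpq

theorem inv_natCast_mem_sIntegers {p : ℕ} (hp : p.Prime) : (p : ℚ)⁻¹ ∈ sIntegers {p} := by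
  intro ℓ hℓ hℓp
  have := Fact.mk hp
  have := Fact.mk hℓ
  rw [← one_div, padicNorm.div, padicNorm.padicNorm_of_prime_of_ne hℓp, padicNorm.one, div_one]

theorem exists_mem_sIntegers_singleton_norm_sub_le_one {p : ℕ} [hp : Fact p.Prime]
    (y : ℚ_[p]) : ∃ s ∈ sIntegers {p}, ‖y - s‖ ≤ 1 := by
  -- `p ^ k * y` is a `p`-adic integer; an integer `n` agreeing with it modulo `p ^ k` gives
  -- `s = n / p ^ k`.
  have hp1 : (1 : ℝ) < p := mod_cast hp.out.one_lt
  obtain ⟨k, hk⟩ := pow_unbounded_of_one_lt ‖y‖ hp1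
  have hpk : ‖(p : ℚ_[p]) ^ k‖ = ((p : ℝ) ^ k)⁻¹ := by
    rw [Padic.norm_p_pow, zpow_neg, zpow_natCast]
  have hp0 : (p : ℚ_[p]) ≠ 0 := mod_cast hp.out.ne_zero
  let z : ℤ_[p] := ⟨p ^ k * y, by
    rw [norm_mul, hpk, inv_mul_le_one₀ (by positivity)]
    exact hk.le⟩
  set n := PadicInt.appr z k
  have hzn : ‖(p : ℚ_[p]) ^ k * y - n‖ ≤ ((p : ℝ) ^ k)⁻¹ := by
    have := (PadicInt.norm_le_pow_iff_mem_span_pow _ k).2 (PadicInt.appr_spec k z)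
    rwa [zpow_neg, zpow_natCast] at this
  refine ⟨n * ((p : ℚ)⁻¹) ^ k,
    mul_mem (natCast_mem _ n) (pow_mem (inv_natCast_mem_sIntegers hp.out) k), ?_⟩
  have hy : y - ((n * ((p : ℚ)⁻¹) ^ k : ℚ) : ℚ_[p]) =
      ((p : ℚ_[p]) ^ k)⁻¹ * ((p : ℚ_[p]) ^ k * y - n) := by
    push_cast
    rw [inv_pow]
    field_simp
  rw [hy, norm_mul, norm_inv, hpk, inv_inv]
  calc (p : ℝ) ^ k * ‖(p : ℚ_[p]) ^ k * y - n‖ ≤ (p : ℝ) ^ k * ((p : ℝ) ^ k)⁻¹ := by gcongr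
    _ = 1 := mul_inv_cancel₀ (by positivity)

theorem exists_mem_sIntegers_forall_sub_mem_subring {ι : Type*} [Fintype ι] {q : ι → ℕ}
    [∀ i, Fact (q i).Prime] (hq : Function.Injective q) (y : ∀ i, ℚ_[q i]) :
    ∃ m ∈ sIntegers (Set.range q), ∀ i, y i - m ∈ PadicInt.subring (q i) := by
  classical
  choose s hs hys using fun i => exists_mem_sIntegers_singleton_norm_sub_le_one (y i)
  refine ⟨∑ j, s j, Subring.sum_mem _ fun j _ => sIntegers_mono (by simp) (hs j), fun i => ?_⟩
  rw [← Finset.add_sum_erase _ _ (Finset.mem_univ i), Rat.cast_add, Rat.cast_sum, ← sub_sub]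
  refine sub_mem (hys i) (Subring.sum_mem _ fun j hj => ?_)
  exact norm_le_one_of_mem_sIntegers (hs j) (hq.ne (Finset.ne_of_mem_erase hj)).symm

def IsSIntegerPart {ι : Type*} (q : ι → ℕ) [∀ i, Fact (q i).Prime] (x : ℝ) (y : ∀ i, ℚ_[q i])
    (m : ℚ) : Prop :=
  m ∈ sIntegers (Set.range q) ∧ x - m ∈ Set.Ico (0 : ℝ) 1 ∧ ∀ i, y i - m ∈ PadicInt.subring (q i)

section IsSIntegerPart

variable {ι : Type*} {q : ι → ℕ} [∀ i, Fact (q i).Prime] {x : ℝ} {y : ∀ i, ℚ_[q i]}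

theorem exists_isSIntegerPart [Fintype ι] (hq : Function.Injective q) (x : ℝ)
    (y : ∀ i, ℚ_[q i]) : ∃ m, IsSIntegerPart q x y m := by
  obtain ⟨m₀, hm₀, hym₀⟩ := exists_mem_sIntegers_forall_sub_mem_subring hq y
  refine ⟨m₀ + ⌊x - m₀⌋, add_mem hm₀ (intCast_mem _ _), ?_, fun i => ?_⟩
  · rw [← Int.floor_eq_zero_iff, Rat.cast_add, Rat.cast_intCast, ← sub_sub,
      Int.floor_sub_intCast, sub_self]
  · rw [Rat.cast_add, Rat.cast_intCast, ← sub_sub]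
    exact sub_mem (hym₀ i) (intCast_mem _ _)

theorem IsSIntegerPart.unique {m m' : ℚ} (hm : IsSIntegerPart q x y m)
    (hm' : IsSIntegerPart q x y m') : m' = m := by
  obtain ⟨hmS, hxm, hym⟩ := hm
  obtain ⟨hm'S, hxm', hym'⟩ := hm'
  have hint : m' - m ∈ sIntegers ∅ := mem_sIntegers_empty_of_norm_le_one (sub_mem hm'S hmS)
    fun i => by simpa using sub_mem (hym i) (hym' i)
  obtain ⟨n, hn⟩ := Subring.mem_bot.1 (sIntegers_empty ▸ hint)
  have hx : x - m' = (x - m) - n := by rw [← Rat.cast_intCast, hn]; push_cast; ring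
  rw [← Int.floor_eq_zero_iff] at hxm hxm'
  rw [hx, Int.floor_sub_intCast, hxm, zero_sub, neg_eq_zero] at hxm'
  rw [← sub_eq_zero, ← hn, hxm', Int.cast_zero]

end IsSIntegerPart

/-- `[0,1) × ℤ_{q_1} × ⋯ × ℤ_{q_r}` is a fundamental domain for the diagonally embedded
ring of `S`-integers `ℤ^S` acting additively on `ℚ_S = ℝ × ℚ_{q_1} × ⋯ × ℚ_{q_r}`. -/
theorem stmt9 (r : ℕ) (q : Fin r → ℕ) [hq : ∀ i, Fact (Nat.Prime (q i))]
    (hinj : Function.Injective q)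
    (x : ℝ) (y : ∀ i, ℚ_[q i]) :
    ∃! m : ℚ,
      (∀ p : ℕ, p.Prime → (∀ i, q i ≠ p) → padicNorm p m ≤ 1) ∧
      x - (m : ℝ) ∈ Set.Ico (0:ℝ) 1 ∧
      ∀ i, ‖y i - (m : ℚ_[q i])‖ ≤ 1 := by
  simp only [← mem_sIntegers_range, ← PadicInt.mem_subring_iff]
  obtain ⟨m, hm⟩ := exists_isSIntegerPart hinj x y
  exact ⟨m, hm, fun m' hm' => hm.unique hm'⟩
end

section
/- Let p be a prime, let T ≤ GL₂(ℚ_p) be the subgroup of invertible diagonal matrices, and for j ∈ ℕ let u_j = [[1, p^{−j}], [0, 1]]. Then every g ∈ GL₂(ℚ_p) lies in the double coset T·u_j·K_p for exactly one j ∈ ℕ; that is, the double cosets T u_j K_p, j ≥ 0, are pairwise disjoint and their union is GL₂(ℚ_p). -/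
/-- The matrix `u_j = [[1, p^{−j}], [0, 1]]` over `ℚ_p`. -/
noncomputable def uMat (p : ℕ) [Fact (Nat.Prime p)] (j : ℕ) : Matrix (Fin 2) (Fin 2) ℚ_[p] :=
  !![1, (p : ℚ_[p]) ^ (-(j:ℤ)); 0, 1]

/-- The maximal compact subgroup `K_p = GL₂(ℤ_p)`, viewed as the set of invertible matrices
`k` over `ℚ_p` such that all entries of `k` and of `k⁻¹` have norm at most `1`. -/
def Kp (p : ℕ) [Fact (Nat.Prime p)] : Set (Matrix (Fin 2) (Fin 2) ℚ_[p]) :=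
  {k | IsUnit k ∧ ∀ i j, ‖k i j‖ ≤ 1 ∧ ‖k⁻¹ i j‖ ≤ 1}

/-!
Column operations by elements of `K_p` make `g` upper triangular, `g = [[a, b], [0, d]] k`, and
pulling out `diag(a, d)` leaves a unipotent `[[1, c], [0, 1]]`. If `|c| ≤ 1` it lies in
`u_0 K_p`; otherwise `|c| = p^j` with `j > 0`, `a' = c p^j` is a unit and
`[[1, c], [0, 1]] = diag(a', 1) u_j diag(a'⁻¹, 1)`.

For uniqueness, right multiplication by `K_p` preserves the sup norm of each row and the norm of
the determinant, while `T` rescales the two rows, so `p^j = ‖g₀‖ ‖g₁‖ / |det g|` depends only on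
the double coset `T g K_p`.
-/

open Matrix

section Ultrametric

variable {K : Type*} [NormedField K] [IsUltrametricDist K] {n m : Type*} [Fintype n] [Fintype m]

theorem Matrix.norm_vecMul_le_of_forall_norm_le_one (v : n → K) {M : Matrix n m K}
    (hM : ∀ i j, ‖M i j‖ ≤ 1) : ‖v ᵥ* M‖ ≤ ‖v‖ :=
  (pi_norm_le_iff_of_nonneg (norm_nonneg v)).2 fun j =>
    IsUltrametricDist.norm_sum_le_of_forall_le_of_nonneg (norm_nonneg v) fun i _ => by
      rw [norm_mul]
      exact (mul_le_of_le_one_right (norm_nonneg _) (hM i j)).trans (norm_le_pi_norm v i)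

variable [DecidableEq n]

theorem Matrix.norm_vecMul_eq_of_forall_norm_le_one (v : n → K) {M : Matrix n n K}
    (hM : IsUnit M) (hM₁ : ∀ i j, ‖M i j‖ ≤ 1) (hM₂ : ∀ i j, ‖M⁻¹ i j‖ ≤ 1) :
    ‖v ᵥ* M‖ = ‖v‖ := by
  refine le_antisymm (norm_vecMul_le_of_forall_norm_le_one v hM₁) ?_
  calc ‖v‖ = ‖v ᵥ* M ᵥ* M⁻¹‖ := by
        rw [vecMul_vecMul, mul_nonsing_inv _ ((isUnit_iff_isUnit_det M).1 hM), vecMul_one]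
    _ ≤ ‖v ᵥ* M‖ := norm_vecMul_le_of_forall_norm_le_one _ hM₂

theorem Matrix.norm_det_le_one_of_forall_norm_le_one {M : Matrix n n K}
    (hM : ∀ i j, ‖M i j‖ ≤ 1) : ‖M.det‖ ≤ 1 := by
  rw [det_apply']
  refine IsUltrametricDist.norm_sum_le_of_forall_le_of_nonneg zero_le_one fun σ _ => ?_
  have hsign : ‖((Equiv.Perm.sign σ : ℤ) : K)‖ ≤ 1 := by
    rcases Int.units_eq_one_or (Equiv.Perm.sign σ) with h | h <;> simp [h]
  rw [norm_mul, norm_prod]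
  exact mul_le_one₀ hsign (Finset.prod_nonneg fun _ _ => norm_nonneg _)
    (Finset.prod_le_one (fun _ _ => norm_nonneg _) fun i _ => hM _ _)

theorem Matrix.norm_det_eq_one_of_forall_norm_le_one {M : Matrix n n K} (hM : IsUnit M)
    (hM₁ : ∀ i j, ‖M i j‖ ≤ 1) (hM₂ : ∀ i j, ‖M⁻¹ i j‖ ≤ 1) : ‖M.det‖ = 1 := by
  have h : ‖M.det‖ * ‖M⁻¹.det‖ = 1 := by
    rw [← norm_mul, ← det_mul, mul_nonsing_inv _ ((isUnit_iff_isUnit_det M).1 hM), det_one,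
      norm_one]
  have h₁ := norm_det_le_one_of_forall_norm_le_one hM₁
  have h₂ := norm_det_le_one_of_forall_norm_le_one hM₂
  nlinarith [norm_nonneg M.det, norm_nonneg M⁻¹.det]

theorem Matrix.norm_inv_apply_le_one_of_norm_det_eq_one {M : Matrix n n K}
    (hM : ∀ i j, ‖M i j‖ ≤ 1) (hdet : ‖M.det‖ = 1) (i j : n) : ‖M⁻¹ i j‖ ≤ 1 := by
  rw [inv_def, smul_apply, smul_eq_mul, norm_mul, Ring.inverse_eq_inv', norm_inv, hdet, inv_one,
    one_mul, adjugate_apply]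
  refine norm_det_le_one_of_forall_norm_le_one fun k l => ?_
  rw [updateRow_apply]
  split_ifs
  · rw [Pi.single_apply]; split_ifs <;> simp
  · exact hM k l

end Ultrametric

theorem Pi.norm_fin_two {E : Type*} [SeminormedAddGroup E] (v : Fin 2 → E) :
    ‖v‖ = max ‖v 0‖ ‖v 1‖ :=
  le_antisymm
    ((pi_norm_le_iff_of_nonneg (by positivity)).2
      (Fin.forall_fin_two.2 ⟨le_max_left _ _, le_max_right _ _⟩))
    (max_le (norm_le_pi_norm v 0) (norm_le_pi_norm v 1))

section

variable {p : ℕ} [Fact p.Prime]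

theorem Padic.exists_norm_eq_pow_of_one_lt_norm {x : ℚ_[p]} (hx : 1 < ‖x‖) :
    ∃ j : ℕ, ‖x‖ = (p : ℝ) ^ j := by
  have hp : (1 : ℝ) < p := by exact_mod_cast (Fact.out : p.Prime).one_lt
  have hx₀ : x ≠ 0 := norm_pos_iff.1 (zero_lt_one.trans hx)
  rw [Padic.norm_eq_zpow_neg_valuation hx₀] at hx ⊢
  exact ⟨(-x.valuation).toNat, by
    rw [← zpow_natCast, Int.toNat_of_nonneg ((one_lt_zpow_iff_right₀ hp).1 hx).le]⟩

theorem mem_Kp_iff {k : Matrix (Fin 2) (Fin 2) ℚ_[p]} :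
    k ∈ Kp p ↔ (∀ i j, ‖k i j‖ ≤ 1) ∧ ‖k.det‖ = 1 := by
  constructor
  · rintro ⟨hk, hk'⟩
    exact ⟨fun i j => (hk' i j).1,
      norm_det_eq_one_of_forall_norm_le_one hk (fun i j => (hk' i j).1) fun i j => (hk' i j).2⟩
  · rintro ⟨hk, hdet⟩
    have hdet₀ : k.det ≠ 0 := norm_ne_zero_iff.1 (by rw [hdet]; exact one_ne_zero)
    exact ⟨(isUnit_iff_isUnit_det k).2 hdet₀.isUnit,
      fun i j => ⟨hk i j, norm_inv_apply_le_one_of_norm_det_eq_one hk hdet i j⟩⟩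

theorem Kp.norm_row_mul {k : Matrix (Fin 2) (Fin 2) ℚ_[p]} (hk : k ∈ Kp p)
    (A : Matrix (Fin 2) (Fin 2) ℚ_[p]) (i : Fin 2) : ‖(A * k) i‖ = ‖A i‖ :=
  norm_vecMul_eq_of_forall_norm_le_one (A i) hk.1 (fun i j => (hk.2 i j).1)
    fun i j => (hk.2 i j).2

theorem Kp.norm_det_mul {k : Matrix (Fin 2) (Fin 2) ℚ_[p]} (hk : k ∈ Kp p)
    (A : Matrix (Fin 2) (Fin 2) ℚ_[p]) : ‖(A * k).det‖ = ‖A.det‖ := by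
  rw [det_mul, norm_mul, (mem_Kp_iff.1 hk).2, mul_one]

theorem Kp.mul_mem {k k' : Matrix (Fin 2) (Fin 2) ℚ_[p]} (hk : k ∈ Kp p) (hk' : k' ∈ Kp p) :
    k * k' ∈ Kp p := by
  refine mem_Kp_iff.2 ⟨fun i j => ?_, by rw [Kp.norm_det_mul hk', (mem_Kp_iff.1 hk).2]⟩
  calc ‖(k * k') i j‖ ≤ ‖k i ᵥ* k'‖ := norm_le_pi_norm _ j
    _ ≤ ‖k i‖ := norm_vecMul_le_of_forall_norm_le_one _ fun i j => (hk'.2 i j).1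
    _ ≤ 1 := (pi_norm_le_iff_of_nonneg zero_le_one).2 fun j => (hk.2 i j).1

theorem Kp.inv_mem {k : Matrix (Fin 2) (Fin 2) ℚ_[p]} (hk : k ∈ Kp p) : k⁻¹ ∈ Kp p := by
  have hdet : IsUnit k.det := (isUnit_iff_isUnit_det k).1 hk.1
  refine ⟨isUnit_nonsing_inv_iff.2 hk.1, fun i j => ?_⟩
  rw [nonsing_inv_nonsing_inv k hdet]
  exact (hk.2 i j).symm

theorem pow_mul_norm_det_eq_norm_row_mul_norm_row {j : ℕ} {t k : Matrix (Fin 2) (Fin 2) ℚ_[p]}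
    (ht₀₁ : t 0 1 = 0) (ht₁₀ : t 1 0 = 0) (hk : k ∈ Kp p) :
    (p : ℝ) ^ j * ‖(t * uMat p j * k).det‖ =
      ‖(t * uMat p j * k) 0‖ * ‖(t * uMat p j * k) 1‖ := by
  have htu : t * uMat p j = !![t 0 0, t 0 0 * (p : ℚ_[p]) ^ (-(j : ℤ)); 0, t 1 1] := by
    rw [eta_fin_two t, ht₀₁, ht₁₀]
    simp [uMat]
  have hpj : 1 ≤ (p : ℝ) ^ j := one_le_pow₀ (by exact_mod_cast (Fact.out : p.Prime).one_lt.le)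
  rw [Kp.norm_det_mul hk, Kp.norm_row_mul hk, Kp.norm_row_mul hk, htu, det_fin_two_of,
    Pi.norm_fin_two, Pi.norm_fin_two]
  simp only [Fin.isValue, _root_.zpow_neg, zpow_natCast, mul_zero, sub_zero, norm_mul, of_apply,
    cons_val', cons_val_zero, cons_val_fin_one, cons_val_one, norm_inv, Padic.norm_p_pow, inv_inv,
    norm_zero, norm_nonneg, sup_of_le_right]
  rw [max_eq_right (le_mul_of_one_le_right (norm_nonneg _) hpj)]
  ring

theorem eq_of_mul_uMat_mul_eq_mul_uMat_mul {g t t' k k' : Matrix (Fin 2) (Fin 2) ℚ_[p]}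
    {j j' : ℕ}
    (hg : IsUnit g) (ht₀₁ : t 0 1 = 0) (ht₁₀ : t 1 0 = 0) (hk : k ∈ Kp p)
    (ht'₀₁ : t' 0 1 = 0) (ht'₁₀ : t' 1 0 = 0) (hk' : k' ∈ Kp p)
    (h : g = t * uMat p j * k) (h' : g = t' * uMat p j' * k') : j = j' := by
  have hp : p.Prime := Fact.out
  have hdet : ‖g.det‖ ≠ 0 := norm_ne_zero_iff.2 ((isUnit_iff_isUnit_det g).1 hg).ne_zero
  have hpow : (p : ℝ) ^ j = (p : ℝ) ^ j' := by
    refine mul_right_cancel₀ hdet ?_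
    calc (p : ℝ) ^ j * ‖g.det‖ = ‖g 0‖ * ‖g 1‖ := by
          rw [h]; exact pow_mul_norm_det_eq_norm_row_mul_norm_row ht₀₁ ht₁₀ hk
      _ = (p : ℝ) ^ j' * ‖g.det‖ := by
          rw [h']; exact (pow_mul_norm_det_eq_norm_row_mul_norm_row ht'₀₁ ht'₁₀ hk').symm
  exact pow_right_injective₀ (by exact_mod_cast hp.pos) (by exact_mod_cast hp.ne_one) hpow

theorem exists_mem_Kp_mul_apply_one_zero_eq_zero (g : Matrix (Fin 2) (Fin 2) ℚ_[p]) :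
    ∃ k ∈ Kp p, (g * k) 1 0 = 0 := by
  rcases le_or_gt ‖g 1 0‖ ‖g 1 1‖ with h | h
  · have hr : ‖g 1 0‖ / ‖g 1 1‖ ≤ 1 := div_le_one_of_le₀ h (norm_nonneg _)
    refine ⟨!![1, 0; -(g 1 0 / g 1 1), 1], by simp [mem_Kp_iff, Fin.forall_fin_two, hr], ?_⟩
    rcases eq_or_ne (g 1 1) 0 with h₀ | h₀
    · have hg₁₀ : g 1 0 = 0 := by simpa [h₀] using h
      simp [mul_apply, Fin.sum_univ_two, hg₁₀, h₀]
    · simp [mul_apply, Fin.sum_univ_two, mul_div_cancel₀ _ h₀]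
  · have h₀ : g 1 0 ≠ 0 := norm_pos_iff.1 ((norm_nonneg _).trans_lt h)
    have hr : ‖g 1 1‖ / ‖g 1 0‖ ≤ 1 := div_le_one_of_le₀ h.le (norm_nonneg _)
    refine ⟨!![-(g 1 1 / g 1 0), 1; 1, 0], by simp [mem_Kp_iff, Fin.forall_fin_two, hr], ?_⟩
    simp [mul_apply, Fin.sum_univ_two, mul_div_cancel₀ _ h₀]

theorem exists_eq_upperTriangular_mul_mem_Kp (g : Matrix (Fin 2) (Fin 2) ℚ_[p]) (hg : IsUnit g) :
    ∃ a b d k, a ≠ 0 ∧ d ≠ 0 ∧ k ∈ Kp p ∧ g = !![a, b; 0, d] * k := by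
  obtain ⟨k, hk, hk₁₀⟩ := exists_mem_Kp_mul_apply_one_zero_eq_zero g
  have hdet : (g * k).det ≠ 0 := ((isUnit_iff_isUnit_det _).1 (hg.mul hk.1)).ne_zero
  rw [det_fin_two, hk₁₀, mul_zero, sub_zero] at hdet
  refine ⟨_, (g * k) 0 1, _, k⁻¹, left_ne_zero_of_mul hdet, right_ne_zero_of_mul hdet,
    Kp.inv_mem hk, ?_⟩
  rw [← hk₁₀, ← eta_fin_two, mul_assoc, mul_nonsing_inv _ ((isUnit_iff_isUnit_det k).1 hk.1),
    mul_one]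

theorem exists_upperUnipotent_eq_diag_mul_uMat_mul_mem_Kp (c : ℚ_[p]) :
    ∃ (j : ℕ) (a : ℚ_[p]) (k : Matrix (Fin 2) (Fin 2) ℚ_[p]),
      a ≠ 0 ∧ k ∈ Kp p ∧ !![1, c; 0, 1] = !![a, 0; 0, 1] * uMat p j * k := by
  rcases le_or_gt ‖c‖ 1 with hc | hc
  · have hc₁ : ‖c - 1‖ ≤ 1 := by
      have h := IsUltrametricDist.norm_add_le_max c (-1)
      rw [norm_neg, norm_one, ← sub_eq_add_neg] at h
      exact h.trans (max_le hc le_rfl)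
    refine ⟨0, 1, !![1, c - 1; 0, 1], one_ne_zero,
      by simp [mem_Kp_iff, Fin.forall_fin_two, hc₁], by simp [uMat]⟩
  · obtain ⟨j, hj⟩ := Padic.exists_norm_eq_pow_of_one_lt_norm hc
    have hp₀ : (p : ℚ_[p]) ≠ 0 := by exact_mod_cast (Fact.out : p.Prime).ne_zero
    set a := c * (p : ℚ_[p]) ^ j
    have ha : ‖a‖ = 1 := by
      rw [norm_mul, hj, norm_pow, ← mul_pow, Padic.norm_p, mul_inv_cancel₀ (by simpa using hp₀),
        one_pow]
    have ha₀ : a ≠ 0 := norm_ne_zero_iff.1 (by simp [ha])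
    refine ⟨j, a, !![a⁻¹, 0; 0, 1], ha₀, by simp [mem_Kp_iff, Fin.forall_fin_two, ha], ?_⟩
    have hu : !![a, 0; 0, 1] * uMat p j * !![a⁻¹, 0; 0, 1] =
        !![1, a * ((p : ℚ_[p]) ^ j)⁻¹; 0, 1] := by
      simp [uMat, mul_inv_cancel₀ ha₀]
    rw [hu, mul_inv_cancel_right₀ (pow_ne_zero j hp₀)]

theorem exists_eq_diag_mul_uMat_mul_mem_Kp (g : Matrix (Fin 2) (Fin 2) ℚ_[p]) (hg : IsUnit g) :
    ∃ (j : ℕ) (t k : Matrix (Fin 2) (Fin 2) ℚ_[p]),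
      (IsUnit t ∧ t 0 1 = 0 ∧ t 1 0 = 0) ∧ k ∈ Kp p ∧ g = t * uMat p j * k := by
  obtain ⟨a, b, d, k₁, ha, hd, hk₁, rfl⟩ := exists_eq_upperTriangular_mul_mem_Kp g hg
  obtain ⟨j, a', k₂, ha', hk₂, hu⟩ := exists_upperUnipotent_eq_diag_mul_uMat_mul_mem_Kp (b / a)
  refine ⟨j, !![a * a', 0; 0, d], k₂ * k₁, ⟨?_, rfl, rfl⟩, Kp.mul_mem hk₂ hk₁, ?_⟩
  · simp [isUnit_iff_isUnit_det, ha, ha', hd]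
  · calc !![a, b; 0, d] * k₁ = !![a, 0; 0, d] * !![1, b / a; 0, 1] * k₁ := by
          simp [mul_div_cancel₀ _ ha]
      _ = !![a * a', 0; 0, d] * uMat p j * (k₂ * k₁) := by
          simp only [hu, ← mul_assoc]
          simp

end

/-- Every `g ∈ GL₂(ℚ_p)` lies in the double coset `T·u_j·K_p` for exactly one `j ∈ ℕ`,
where `T` is the diagonal torus. -/
theorem stmt12 (p : ℕ) [Fact (Nat.Prime p)]
    (g : Matrix (Fin 2) (Fin 2) ℚ_[p]) (hg : IsUnit g) :
    ∃! j : ℕ, ∃ t k : Matrix (Fin 2) (Fin 2) ℚ_[p],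
      (IsUnit t ∧ t 0 1 = 0 ∧ t 1 0 = 0) ∧ k ∈ Kp p ∧ g = t * uMat p j * k := by
  obtain ⟨j, t, k, ht, hk, hg_eq⟩ := exists_eq_diag_mul_uMat_mul_mem_Kp g hg
  refine ⟨j, ⟨t, k, ht, hk, hg_eq⟩, ?_⟩
  rintro j' ⟨t', k', ⟨-, ht'₀₁, ht'₁₀⟩, hk', hg_eq'⟩
  exact eq_of_mul_uMat_mul_eq_mul_uMat_mul hg ht'₀₁ ht'₁₀ hk' ht.2.1 ht.2.2 hk hg_eq' hg_eq
end

section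
/- Let p be a prime, let α, β ∈ ℚ_p with ‖α‖_p ≤ 1 and ‖β‖_p ≤ 1, let a, κ ∈ ℚ_p and j ∈ ℕ. Set M = a·I + κ·Δ = [[a, κα], [κ, a + κβ]], where Δ = [[0, α], [1, β]], and let L ⊆ ℚ_p × ℚ_p be the ℤ_p-submodule spanned by (1, 0) and (0, p^j). Then M maps L into L if and only if ‖a‖_p ≤ 1 and ‖κ‖_p ≤ p^{−j}. -/
/-!
Membership in `L` means `‖v 0‖ ≤ 1` and `‖v 1‖ ≤ p^{-j}`. Testing `M` on `(1, 0) ∈ L` gives the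
necessity of `‖a‖ ≤ 1` and `‖κ‖ ≤ p^{-j}`. Conversely, by the ultrametric inequality a matrix
`[[a, b], [c, d]]` with `‖a‖, ‖d‖ ≤ 1`, `‖b‖ p^{-j} ≤ 1` and `‖c‖ ≤ p^{-j}` preserves `L`, and `M`
satisfies these bounds because `‖α‖, ‖β‖ ≤ 1`.
-/

/-- The `ℤ_p`-submodule of `ℚ_p²` spanned by `(1, 0)` and `(0, p^j)`: the set of
`ℤ_p`-linear combinations `a•(1,0) + b•(0,p^j)` with `‖a‖ ≤ 1`, `‖b‖ ≤ 1`. -/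
noncomputable def Lspan' (p : ℕ) [Fact (Nat.Prime p)] (j : ℕ) : Set (Fin 2 → ℚ_[p]) :=
  {v | ∃ a b : ℚ_[p], ‖a‖ ≤ 1 ∧ ‖b‖ ≤ 1 ∧
    v = a • ![(1 : ℚ_[p]), 0] + b • ![(0 : ℚ_[p]), (p : ℚ_[p]) ^ j]}

section Ultrametric

variable {K : Type*} [NormedField K] [IsUltrametricDist K]

theorem norm_add_mul_le_of_le {x y u v : K} {r : ℝ} (hx : ‖x‖ * ‖u‖ ≤ r)
    (hy : ‖y‖ * ‖v‖ ≤ r) : ‖x * u + y * v‖ ≤ r :=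
  (IsUltrametricDist.norm_add_le_max _ _).trans (by simpa only [norm_mul] using max_le hx hy)

theorem Matrix.mulVec_fin_two_norm_le {a b c d : K} {r : ℝ} (ha : ‖a‖ ≤ 1) (hb : ‖b‖ * r ≤ 1)
    (hc : ‖c‖ ≤ r) (hd : ‖d‖ ≤ 1) {v : Fin 2 → K} (hv₀ : ‖v 0‖ ≤ 1) (hv₁ : ‖v 1‖ ≤ r) :
    ‖(!![a, b; c, d]).mulVec v 0‖ ≤ 1 ∧ ‖(!![a, b; c, d]).mulVec v 1‖ ≤ r := by
  have hr : 0 ≤ r := (norm_nonneg _).trans hv₁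
  simp only [Matrix.mulVec, Matrix.vec2_dotProduct, Matrix.of_apply, Matrix.cons_val',
    Matrix.cons_val_zero, Matrix.cons_val_one, Matrix.empty_val', Matrix.cons_val_fin_one]
  refine ⟨norm_add_mul_le_of_le ?_ ?_, norm_add_mul_le_of_le ?_ ?_⟩
  · exact mul_le_one₀ ha (norm_nonneg _) hv₀
  · exact (mul_le_mul_of_nonneg_left hv₁ (norm_nonneg b)).trans hb
  · simpa using mul_le_mul hc hv₀ (norm_nonneg _) hr
  · simpa using mul_le_mul hd hv₁ (norm_nonneg _) zero_le_one

end Ultrametric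

section Padic

variable {p : ℕ} [Fact (Nat.Prime p)]

theorem natCast_zpow_neg_natCast_pos (j : ℕ) : 0 < (p : ℝ) ^ (-(j : ℤ)) :=
  zpow_pos (mod_cast (Fact.out : p.Prime).pos) _

theorem natCast_zpow_neg_natCast_le_one (j : ℕ) : (p : ℝ) ^ (-(j : ℤ)) ≤ 1 :=
  zpow_le_one_of_nonpos₀ (mod_cast (Fact.out : p.Prime).one_le) (by simp)

theorem mem_Lspan'_iff {j : ℕ} {v : Fin 2 → ℚ_[p]} :
    v ∈ Lspan' p j ↔ ‖v 0‖ ≤ 1 ∧ ‖v 1‖ ≤ (p : ℝ) ^ (-(j : ℤ)) := by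
  have hpj : (p : ℚ_[p]) ^ j ≠ 0 := pow_ne_zero _ (mod_cast (Fact.out : p.Prime).ne_zero)
  constructor
  · rintro ⟨x, y, hx, hy, rfl⟩
    simp only [Pi.add_apply, Pi.smul_apply, Matrix.cons_val_zero, Matrix.cons_val_one,
      smul_eq_mul, mul_one, mul_zero, add_zero, zero_add, norm_mul, Padic.norm_p_pow]
    exact ⟨hx, mul_le_of_le_one_left (natCast_zpow_neg_natCast_pos j).le hy⟩
  · rintro ⟨h₀, h₁⟩
    refine ⟨v 0, v 1 / (p : ℚ_[p]) ^ j, h₀, ?_, ?_⟩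
    · rwa [norm_div, Padic.norm_p_pow, div_le_one (natCast_zpow_neg_natCast_pos j)]
    · ext i
      fin_cases i <;> simp [div_mul_cancel₀ _ hpj]

end Padic

theorem stmt15 (p : ℕ) [Fact (Nat.Prime p)] (α β : ℚ_[p])
    (hα : ‖α‖ ≤ 1) (hβ : ‖β‖ ≤ 1) (a κ : ℚ_[p]) (j : ℕ) :
    (∀ v ∈ Lspan' p j, (!![a, κ * α; κ, a + κ * β]).mulVec v ∈ Lspan' p j) ↔
      ‖a‖ ≤ 1 ∧ ‖κ‖ ≤ (p : ℝ) ^ (-(j:ℤ)) := by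
  have hr₁ := natCast_zpow_neg_natCast_le_one (p := p) j
  constructor
  · intro h
    have he₀ : ![(1 : ℚ_[p]), 0] ∈ Lspan' p j := by simp [mem_Lspan'_iff]
    simpa [mem_Lspan'_iff, Matrix.mulVec, Matrix.vec2_dotProduct] using h _ he₀
  · rintro ⟨ha, hκ⟩ v hv
    rw [mem_Lspan'_iff] at hv ⊢
    have hκ₁ : ‖κ‖ ≤ 1 := hκ.trans hr₁
    have hκα : ‖κ * α‖ * (p : ℝ) ^ (-(j : ℤ)) ≤ 1 :=
      mul_le_one₀ (norm_mul_le_of_le hκ₁ hα |>.trans (by norm_num)) (by positivity) hr₁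
    have hd : ‖a + κ * β‖ ≤ 1 :=
      (IsUltrametricDist.norm_add_le_max _ _).trans
        (max_le ha (norm_mul_le_of_le hκ₁ hβ |>.trans (by norm_num)))
    exact Matrix.mulVec_fin_two_norm_le ha hκα hκ hd hv.1 hv.2
end

section
/- Let p be a prime and let α, β ∈ ℤ_p be such that the polynomial X² − βX − α has no root modulo p (equivalently, its reduction is irreducible over 𝔽_p). Let R = {a·I + c·Δ : a, c ∈ ℤ_p} ⊆ M₂(ℤ_p), where Δ = [[0, α], [1, β]]; R is a subring of M₂(ℤ_p). Then for every integer j ≥ 1, the set {a·I + c·Δ ∈ R^× : c ∈ p^jℤ_p} is a subgroup of the unit group R^× of index p^{j−1}(p + 1). -/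
/-!
Via its regular representation, `R` is the quadratic algebra `ℤ_p[ω]` with `ω² = α + βω`, and
the subgroup in question is `H_j = {x + yω ∈ R^× : p^j ∣ y}`. The identity
`N(u) · im(u⁻¹v) = re u · im v − im u · re v` turns "same coset of `H_j`" into a congruence on
coordinates. Since `X² − βX − α` has no root mod `p`, the norm form is anisotropic mod `p`, so
`x + yω` is a unit iff `(x̄, ȳ) ≠ 0`; hence `u ↦ [x̄ : ȳ] ∈ ℙ¹(𝔽_p)` is onto with fibres the
cosets of `H_1`, giving `[R^× : H_1] = p + 1`. For `i ≥ 1`, writing `y = p^i k`, the map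
`u ↦ k̄ / x̄ ∈ 𝔽_p` is onto `H_i` with fibres the cosets of `H_{i+1}`, so `[H_i : H_{i+1}] = p`.
-/

open PadicInt
open scoped LinearAlgebra.Projectivization

theorem Subgroup.index_eq_card_of_surjective_of_eq_iff {G X : Type*} [Group G] {H : Subgroup G}
    (f : G → X) (hf : Function.Surjective f) (hH : ∀ u v, f u = f v ↔ u⁻¹ * v ∈ H) :
    H.index = Nat.card X := by
  rw [Subgroup.index_eq_card]
  exact Nat.card_congr <| (Quotient.congrRight fun u v =>
    QuotientGroup.leftRel_apply.trans (hH u v).symm).trans (Setoid.quotientKerEquivOfSurjective f hf)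

theorem Projectivization.mk_eq_mk_iff_mul_sub_mul_eq_zero {K : Type*} [Field K] {a c a' c' : K}
    (hv : ![a, c] ≠ 0) (hw : ![a', c'] ≠ 0) :
    mk K ![a, c] hv = mk K ![a', c'] hw ↔ a * c' - c * a' = 0 := by
  rw [mk_eq_mk_iff']
  constructor
  · rintro ⟨t, ht⟩
    have h0 := congrFun ht 0
    have h1 := congrFun ht 1
    simp only [Pi.smul_apply, smul_eq_mul, Matrix.cons_val_zero, Matrix.cons_val_one] at h0 h1
    rw [← h0, ← h1]
    ring
  · intro h
    by_cases ha' : a' = 0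
    · have hc' : c' ≠ 0 := by rintro rfl; simp [ha'] at hw
      refine ⟨c / c', ?_⟩
      ext i; fin_cases i <;> simp [ha']
      · exact (by simpa [ha', hc'] using h : a = 0).symm
      · exact div_mul_cancel₀ c hc'
    · refine ⟨a / a', ?_⟩
      ext i; fin_cases i <;> simp <;> field_simp; linear_combination h

namespace PadicInt

variable {p : ℕ} [Fact p.Prime]

theorem toZMod_eq_zero_iff_dvd (x : ℤ_[p]) : toZMod x = 0 ↔ (p : ℤ_[p]) ∣ x := by
  rw [← RingHom.mem_ker, ker_toZMod, maximalIdeal_eq_span_p, Ideal.mem_span_singleton]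

theorem isUnit_iff_toZMod_ne_zero {x : ℤ_[p]} : IsUnit x ↔ toZMod x ≠ 0 := by
  rw [ne_eq, ← RingHom.mem_ker, ker_toZMod, IsLocalRing.mem_maximalIdeal, mem_nonunits_iff,
    not_not]

end PadicInt

namespace QuadraticAlgebra

section CommRing

variable {R : Type*} [CommRing R] {a b : R}

/-- The matrix of left multiplication by `x + yω` in the basis `1, ω`. -/
def toMatrix (a b : R) : QuadraticAlgebra R a b →ₐ[R] Matrix (Fin 2) (Fin 2) R :=
  lift ⟨!![0, a; 1, b], by ext i j; fin_cases i <;> fin_cases j <;> simp [mul_comm]⟩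

theorem toMatrix_apply (z : QuadraticAlgebra R a b) :
    toMatrix a b z = z.re • 1 + z.im • !![0, a; 1, b] :=
  rfl

theorem toMatrix_leftInverse :
    Function.LeftInverse
      (fun M : Matrix (Fin 2) (Fin 2) R => (⟨M 0 0, M 1 0⟩ : QuadraticAlgebra R a b))
      (toMatrix a b) := by
  intro z
  ext <;> simp [toMatrix_apply]

theorem toMatrix_injective : Function.Injective (toMatrix a b) :=
  toMatrix_leftInverse.injective

theorem coe_range_toMatrix :
    ((toMatrix a b).toRingHom.range : Set (Matrix (Fin 2) (Fin 2) R)) =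
      {M | ∃ x y : R, M = x • 1 + y • !![0, a; 1, b]} := by
  ext M
  simp only [SetLike.mem_coe, RingHom.mem_range, AlgHom.toRingHom_eq_coe, RingHom.coe_coe,
    toMatrix_apply]
  exact ⟨fun ⟨z, hz⟩ => ⟨z.re, z.im, hz.symm⟩, fun ⟨x, y, h⟩ => ⟨⟨x, y⟩, h.symm⟩⟩

theorem norm_mul_im_inv_mul (u v : (QuadraticAlgebra R a b)ˣ) :
    norm u.val * (u⁻¹ * v).val.im = u.val.re * v.val.im - u.val.im * v.val.re := by
  have h : star u.val * v = norm u.val • (u⁻¹ * v).val := by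
    rw [Algebra.smul_def, algebraMap_norm_eq_mul_star, Units.val_mul, mul_comm u.val, mul_assoc,
      Units.mul_inv_cancel_left]
  have h_im := congrArg im h
  rw [im_smul, smul_eq_mul, im_mul, re_star, im_star] at h_im
  rw [← h_im]
  ring

theorem dvd_im_inv_mul_iff (m : R) (u v : (QuadraticAlgebra R a b)ˣ) :
    m ∣ (u⁻¹ * v).val.im ↔ m ∣ u.val.re * v.val.im - u.val.im * v.val.re := by
  rw [← norm_mul_im_inv_mul, (u.isUnit.map norm).dvd_mul_left]

def unitsImDvd (m : R) : Subgroup (QuadraticAlgebra R a b)ˣ where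
  carrier := {u | m ∣ u.val.im}
  one_mem' := by simp
  mul_mem' {u v} hu hv := by
    change m ∣ (u * v).val.im
    rw [Units.val_mul, im_mul]
    exact dvd_add (dvd_add (hv.mul_left _) (hu.mul_right _)) ((hu.mul_left _).mul_right _)
  inv_mem' {u} hu := by
    simpa using (dvd_im_inv_mul_iff m u 1).2 (by simpa using hu)

theorem mem_unitsImDvd {m : R} {u : (QuadraticAlgebra R a b)ˣ} :
    u ∈ unitsImDvd m ↔ m ∣ u.val.im :=
  Iff.rfl

theorem unitsImDvd_mono {m n : R} (h : m ∣ n) :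
    (unitsImDvd n : Subgroup (QuadraticAlgebra R a b)ˣ) ≤ unitsImDvd m :=
  fun _ hu => h.trans hu

end CommRing

section PadicInt

variable {p : ℕ} [Fact p.Prime] {α β : ℤ_[p]}

local notation "𝒪" => QuadraticAlgebra ℤ_[p] α β

noncomputable def residue (z : 𝒪) : Fin 2 → ZMod p := ![toZMod z.re, toZMod z.im]

theorem toZMod_norm (z : 𝒪) :
    toZMod (norm z) =
      norm (⟨toZMod z.re, toZMod z.im⟩ : QuadraticAlgebra (ZMod p) (toZMod α) (toZMod β)) := by
  simp [norm_def]

theorem residue_ne_zero_of_isUnit {z : 𝒪} (hz : IsUnit z) : residue z ≠ 0 := by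
  rw [isUnit_iff_norm_isUnit, isUnit_iff_toZMod_ne_zero, toZMod_norm] at hz
  intro h
  apply hz
  have h0 := congrFun h 0
  have h1 := congrFun h 1
  simp only [residue, Matrix.cons_val_zero, Matrix.cons_val_one, Pi.zero_apply] at h0 h1
  simp [norm_def, h0, h1]

theorem isUnit_of_toZMod_im_eq_zero {z : 𝒪} (hre : toZMod z.re ≠ 0) (him : toZMod z.im = 0) :
    IsUnit z := by
  rw [isUnit_iff_norm_isUnit, isUnit_iff_toZMod_ne_zero, toZMod_norm]
  simpa [norm_def, him] using hre

theorem isUnit_of_residue_ne_zero (hirr : ∀ x : ℤ_[p], ¬ (p : ℤ_[p]) ∣ x ^ 2 - β * x - α)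
    {z : 𝒪} (hz : residue z ≠ 0) : IsUnit z := by
  have : Fact (∀ r : ZMod p, r ^ 2 ≠ toZMod α + toZMod β * r) := by
    refine ⟨fun r hr => ?_⟩
    obtain ⟨x, rfl⟩ := ZMod.ringHom_surjective toZMod r
    apply hirr x
    rw [← toZMod_eq_zero_iff_dvd]
    simp only [map_sub, map_mul, map_pow]
    linear_combination hr
  rw [isUnit_iff_norm_isUnit, isUnit_iff_toZMod_ne_zero, toZMod_norm, ne_eq,
    norm_eq_zero_iff_eq_zero]
  contrapose! hz
  simp only [QuadraticAlgebra.ext_iff] at hz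
  ext i; fin_cases i <;> simp [residue, hz.1, hz.2]

noncomputable def projResidue (u : 𝒪ˣ) : ℙ (ZMod p) (Fin 2 → ZMod p) :=
  .mk _ (residue u.val) (residue_ne_zero_of_isUnit u.isUnit)

theorem index_unitsImDvd_p (hirr : ∀ x : ℤ_[p], ¬ (p : ℤ_[p]) ∣ x ^ 2 - β * x - α) :
    (unitsImDvd (p : ℤ_[p]) : Subgroup 𝒪ˣ).index = p + 1 := by
  rw [Subgroup.index_eq_card_of_surjective_of_eq_iff projResidue,
    Projectivization.card_of_finrank_two _ _ (by simp), Nat.card_zmod]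
  · intro w
    induction w using Projectivization.ind with
    | h v hv =>
      obtain ⟨x, hx⟩ := ZMod.ringHom_surjective toZMod (v 0)
      obtain ⟨y, hy⟩ := ZMod.ringHom_surjective toZMod (v 1)
      have hres : residue (⟨x, y⟩ : 𝒪) = v := by
        ext i; fin_cases i <;> simp [residue, hx, hy]
      refine ⟨(isUnit_of_residue_ne_zero hirr (hres ▸ hv)).unit, ?_⟩
      exact (Projectivization.mk_eq_mk_iff' _ _ _ _ _).2 ⟨1, by simp [hres]⟩
  · intro u v
    rw [mem_unitsImDvd, dvd_im_inv_mul_iff, ← toZMod_eq_zero_iff_dvd]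
    simp only [projResidue, residue, Projectivization.mk_eq_mk_iff_mul_sub_mul_eq_zero, map_sub,
      map_mul]

theorem toZMod_re_ne_zero_of_mem_unitsImDvd {u : 𝒪ˣ} (hu : u ∈ unitsImDvd (p : ℤ_[p])) :
    toZMod u.val.re ≠ 0 := by
  intro hre
  apply residue_ne_zero_of_isUnit u.isUnit
  ext i; fin_cases i <;> simp [residue, hre, toZMod_eq_zero_iff_dvd, mem_unitsImDvd.1 hu]

/-- For `u = x + p^i k ω`, the residue of `k / x`. -/
noncomputable def scaledSlope (i : ℕ) (u : (unitsImDvd (p ^ i : ℤ_[p]) : Subgroup 𝒪ˣ)) :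
    ZMod p :=
  toZMod (mem_unitsImDvd.1 u.2).choose / toZMod u.val.val.re

theorem relIndex_unitsImDvd_pow_succ {i : ℕ} (hi : i ≠ 0) :
    (unitsImDvd (p ^ (i + 1) : ℤ_[p]) : Subgroup 𝒪ˣ).relIndex (unitsImDvd (p ^ i)) = p := by
  have hp_dvd : (p : ℤ_[p]) ∣ p ^ i := dvd_pow_self _ hi
  have hpow : (p : ℤ_[p]) ^ i ≠ 0 := pow_ne_zero i PadicInt.prime_p.ne_zero
  have hre (u : (unitsImDvd (p ^ i : ℤ_[p]) : Subgroup 𝒪ˣ)) : toZMod u.val.val.re ≠ 0 :=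
    toZMod_re_ne_zero_of_mem_unitsImDvd (unitsImDvd_mono hp_dvd u.2)
  rw [Subgroup.relIndex, Subgroup.index_eq_card_of_surjective_of_eq_iff (scaledSlope i),
    Nat.card_zmod]
  · intro z
    obtain ⟨x, rfl⟩ := ZMod.ringHom_surjective toZMod z
    have hw : IsUnit (⟨1, p ^ i * x⟩ : 𝒪) :=
      isUnit_of_toZMod_im_eq_zero (by simp) ((toZMod_eq_zero_iff_dvd _).2 (hp_dvd.mul_right x))
    let u : (unitsImDvd (p ^ i : ℤ_[p]) : Subgroup 𝒪ˣ) := ⟨hw.unit, Dvd.intro x rfl⟩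
    have hk : (mem_unitsImDvd.1 u.2).choose = x :=
      mul_left_cancel₀ hpow (mem_unitsImDvd.1 u.2).choose_spec.symm
    refine ⟨u, ?_⟩
    simp only [scaledSlope, hk]
    simp [u]
  · intro u v
    rw [Subgroup.mem_subgroupOf, Subgroup.coe_mul, Subgroup.coe_inv, mem_unitsImDvd,
      dvd_im_inv_mul_iff]
    have hku := (mem_unitsImDvd.1 u.2).choose_spec
    have hkv := (mem_unitsImDvd.1 v.2).choose_spec
    set ku := (mem_unitsImDvd.1 u.2).choose
    set kv := (mem_unitsImDvd.1 v.2).choose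
    have hcross : u.val.val.re * v.val.val.im - u.val.val.im * v.val.val.re =
        p ^ i * (u.val.val.re * kv - ku * v.val.val.re) := by
      rw [hku, hkv]; ring
    rw [hcross, pow_succ, mul_dvd_mul_iff_left hpow, ← toZMod_eq_zero_iff_dvd, scaledSlope,
      scaledSlope, div_eq_div_iff (hre u) (hre v), map_sub, map_mul, map_mul, sub_eq_zero]
    constructor <;> intro h <;> linear_combination -h

theorem index_unitsImDvd_pow_succ (hirr : ∀ x : ℤ_[p], ¬ (p : ℤ_[p]) ∣ x ^ 2 - β * x - α)
    (j : ℕ) : (unitsImDvd (p ^ (j + 1) : ℤ_[p]) : Subgroup 𝒪ˣ).index = p ^ j * (p + 1) := by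
  induction j with
  | zero => simpa using index_unitsImDvd_p hirr
  | succ j ih =>
    rw [← Subgroup.relIndex_mul_index (unitsImDvd_mono (pow_dvd_pow _ (Nat.le_succ _))),
      relIndex_unitsImDvd_pow_succ j.succ_ne_zero, ih, pow_succ]
    ring

end PadicInt

end QuadraticAlgebra

open QuadraticAlgebra

/-- In the subring `R = {a·I + c·Δ : a, c ∈ ℤ_p}` of `M₂(ℤ_p)`, where `Δ = [[0,α],[1,β]]` and
`X² − βX − α` has no root modulo `p`, the set `{a·I + c·Δ ∈ R^× : c ∈ p^jℤ_p}` is a subgroup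
of `R^×` of index `p^{j−1}(p+1)` for every `j ≥ 1`. -/
theorem stmt16 (p : ℕ) [Fact (Nat.Prime p)] (α β : ℤ_[p])
    (hirr : ∀ x : ℤ_[p], ¬ (p : ℤ_[p]) ∣ (x^2 - β * x - α)) :
    ∃ R : Subring (Matrix (Fin 2) (Fin 2) ℤ_[p]),
      (R : Set (Matrix (Fin 2) (Fin 2) ℤ_[p])) =
        {M | ∃ a c : ℤ_[p],
          M = a • (1 : Matrix (Fin 2) (Fin 2) ℤ_[p]) + c • !![0, α; 1, β]} ∧
      ∀ j : ℕ, 1 ≤ j → ∃ H : Subgroup Rˣ,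
        (∀ u : Rˣ, u ∈ H ↔ ∃ a c : ℤ_[p], (p : ℤ_[p])^j ∣ c ∧
          ((u : R) : Matrix (Fin 2) (Fin 2) ℤ_[p]) =
            a • (1 : Matrix (Fin 2) (Fin 2) ℤ_[p]) + c • !![0, α; 1, β]) ∧
        H.index = p^(j-1) * (p+1) := by
  let e := RingEquiv.ofLeftInverse (f := (toMatrix α β).toRingHom) toMatrix_leftInverse
  let φ : (QuadraticAlgebra ℤ_[p] α β)ˣ ≃* _ := Units.mapEquiv e.toMulEquiv
  refine ⟨(toMatrix α β).toRingHom.range, coe_range_toMatrix, fun j hj => ?_⟩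
  obtain ⟨j, rfl⟩ := Nat.exists_eq_add_of_le' hj
  refine ⟨(unitsImDvd (a := α) (b := β) (p ^ (j + 1))).comap (φ.symm : _ →* _), fun u => ?_, ?_⟩
  · obtain ⟨z, hz⟩ := u.val.2
    have hu : (φ.symm u).val = z := by
      change e.symm u.val = z
      rw [show u.val = e z from Subtype.ext hz.symm, RingEquiv.symm_apply_apply]
    rw [Subgroup.mem_comap, MonoidHom.coe_coe, mem_unitsImDvd, hu, ← hz]
    refine ⟨fun h => ⟨z.re, z.im, h, toMatrix_apply z⟩, fun ⟨x, c, hc, h⟩ => ?_⟩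
    rw [← toMatrix_apply (⟨x, c⟩ : QuadraticAlgebra ℤ_[p] α β)] at h
    rwa [toMatrix_injective h]
  · rw [Nat.add_sub_cancel, ← index_unitsImDvd_pow_succ hirr]
    exact Subgroup.index_comap_of_surjective _ φ.symm.surjective
end

section
/- Let p be a prime and let α, β ∈ ℚ_p with ‖α‖_p = 1 and ‖β‖_p ≤ 1 be such that the polynomial X² − βX − α (which then has coefficients in ℤ_p) has no root modulo p (the inert case). Set Δ = [[0, α], [1, β]], let T_Δ be the centralizer of Δ in GL₂(ℚ_p), and put d_j = [[1, 0], [0, p^j]] and w = [[0, 1], [1, 0]]. Then the double cosets T_Δ d_j I_p (j ≥ 0) and T_Δ d_j w I_p (j ≥ 1) are pairwise disjoint and their union is GL₂(ℚ_p); that is, they form a complete set of distinct representatives of T_Δ\GL₂(ℚ_p)/I_p. -/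
/-!
Because `X ^ 2 - β X - α` has no root modulo `p`, the determinant `a ^ 2 + aβc - c ^ 2 α` of
`a + cΔ` has norm `max ‖a‖ ‖c‖ ^ 2`. For the entrywise sup norm this gives `‖t h‖ = ‖t‖ ‖h‖`
for `t ∈ T_Δ`, while `‖h k‖ = ‖h‖` for `k ∈ K_p`. Since moreover `d₁⁻¹ I_p d₁ ⊆ K_p`, the numbers
`‖det g‖ / ‖g‖ ^ 2` and `‖g d₁‖ / ‖g‖` depend only on `T_Δ g I_p`; they are `(p⁻ʲ, 1)` at `d_j`
and `(p⁻ʲ, p⁻¹)` at `d_j w`, which separates the double cosets.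

For existence, `T_Δ` acts simply transitively on nonzero vectors, so normalising the first
column gives `g ∈ T_Δ !![1, x; 0, y]`. Column operations in `I_p` turn this into `diag(1, z)`
(if `‖x‖ ≤ 1`) or, after normalising the second column instead, into `!![0, 1; z, 0]`.
Multiplying by `Δ` exchanges these two shapes while inverting `z`, so `‖z‖ ≤ 1` (resp. `< 1`)
may be assumed, and writing `z = pʲ u` with `‖u‖ = 1` lands on `d_j` (resp. `d_j w`).
-/

/-- The matrix `d_j = [[1, 0], [0, p^j]]` over `ℚ_p`. -/
noncomputable def dMat (p : ℕ) [Fact (Nat.Prime p)] (j : ℕ) : Matrix (Fin 2) (Fin 2) ℚ_[p] :=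
  !![1, 0; 0, (p : ℚ_[p]) ^ j]

/-- The Iwahori subgroup: elements of `K_p` whose lower-left entry has norm `< 1`. -/
def Ip (p : ℕ) [Fact (Nat.Prime p)] : Set (Matrix (Fin 2) (Fin 2) ℚ_[p]) :=
  {k | k ∈ Kp p ∧ ‖k 1 0‖ < 1}

/-- Representatives of `T_Δ\GL₂(ℚ_p)/I_p` in the inert case: `d_j` (j ≥ 0) and `d_j·w`
(j ≥ 1), where `w = [[0,1],[1,0]]`. -/
noncomputable def rep18 (p : ℕ) [Fact (Nat.Prime p)] :
    ℕ ⊕ {j : ℕ // 1 ≤ j} → Matrix (Fin 2) (Fin 2) ℚ_[p]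
  | Sum.inl j => dMat p j
  | Sum.inr j => dMat p j.1 * !![0, 1; 1, 0]

open Matrix DoubleCoset
open scoped Matrix.Norms.Elementwise

section NormedField

variable {K : Type*} [NormedField K]

lemma Matrix.norm_fin_two (a b c d : K) :
    ‖!![a, b; c, d]‖ = max (max ‖a‖ ‖b‖) (max ‖c‖ ‖d‖) := by
  refine le_antisymm ((norm_le_iff (by positivity)).2 fun i j => ?_) ?_
  · fin_cases i <;> fin_cases j <;> simp
  · have h := fun i j => norm_entry_le_entrywise_sup_norm !![a, b; c, d] (i := i) (j := j)
    exact max_le (max_le (h 0 0) (h 0 1)) (max_le (h 1 0) (h 1 1))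

lemma Matrix.norm_inv_fin_two (A : Matrix (Fin 2) (Fin 2) K) : ‖A⁻¹‖ = ‖A‖ / ‖A.det‖ := by
  have hadj : ‖A.adjugate‖ = ‖A‖ := by
    rw [adjugate_fin_two, norm_fin_two, eta_fin_two A, norm_fin_two]
    simp only [norm_neg, of_apply, cons_val', cons_val_zero, cons_val_one, empty_val',
      cons_val_fin_one]
    simp only [max_comm, max_left_comm, max_assoc]
  rw [inv_def, Ring.inverse_eq_inv', norm_smul, hadj, norm_inv, inv_mul_eq_div]

/-- `one_le_norm_eval` says that `X ^ 2 - β X - α` has no root modulo the maximal ideal. -/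
structure IsInert (α β : K) : Prop where
  norm_eq_one : ‖α‖ = 1
  norm_le_one : ‖β‖ ≤ 1
  one_le_norm_eval : ∀ x : K, ‖x‖ ≤ 1 → 1 ≤ ‖x ^ 2 - β * x - α‖

lemma IsInert.ne_zero {α β : K} (h : IsInert α β) : α ≠ 0 :=
  norm_ne_zero_iff.1 (h.norm_eq_one ▸ one_ne_zero)

end NormedField

section Ultrametric

variable {K : Type*} [NormedField K] [IsUltrametricDist K]

lemma IsUltrametricDist.norm_sub_le_max (x y : K) : ‖x - y‖ ≤ max ‖x‖ ‖y‖ := by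
  simpa [sub_eq_add_neg] using IsUltrametricDist.norm_add_le_max x (-y)

lemma Matrix.norm_mul_le_of_ultrametric {m n l : Type*} [Fintype m] [Fintype n] [Fintype l]
    (A : Matrix m n K) (B : Matrix n l K) : ‖A * B‖ ≤ ‖A‖ * ‖B‖ := by
  refine (norm_le_iff (by positivity)).2 fun i j => ?_
  rw [mul_apply]
  refine IsUltrametricDist.norm_sum_le_of_forall_le_of_nonneg (by positivity) fun l _ => ?_
  rw [norm_mul]
  exact mul_le_mul (norm_entry_le_entrywise_sup_norm A) (norm_entry_le_entrywise_sup_norm B)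
    (norm_nonneg _) (norm_nonneg _)

lemma Matrix.norm_det_fin_two_le (A : Matrix (Fin 2) (Fin 2) K) : ‖A.det‖ ≤ ‖A‖ ^ 2 := by
  rw [det_fin_two, sq]
  refine (IsUltrametricDist.norm_sub_le_max _ _).trans (max_le ?_ ?_) <;>
  · rw [norm_mul]
    exact mul_le_mul (norm_entry_le_entrywise_sup_norm A) (norm_entry_le_entrywise_sup_norm A)
      (norm_nonneg _) (norm_nonneg _)

lemma Matrix.norm_mul_eq_of_norm_mul_norm_inv_le_one {n : Type*} [Fintype n] [DecidableEq n]
    {A : Matrix n n K} (hA : IsUnit A) (h : ‖A‖ * ‖A⁻¹‖ ≤ 1) (B : Matrix n n K) :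
    ‖A * B‖ = ‖A‖ * ‖B‖ := by
  refine le_antisymm (norm_mul_le_of_ultrametric A B) ?_
  calc ‖A‖ * ‖B‖ = ‖A‖ * ‖A⁻¹ * (A * B)‖ := by
        rw [← Matrix.mul_assoc, nonsing_inv_mul _ ((isUnit_iff_isUnit_det A).1 hA),
          Matrix.one_mul]
    _ ≤ ‖A‖ * (‖A⁻¹‖ * ‖A * B‖) :=
        mul_le_mul_of_nonneg_left (norm_mul_le_of_ultrametric _ _) (norm_nonneg _)
    _ ≤ ‖A * B‖ := by
        rw [← mul_assoc]
        exact mul_le_of_le_one_left (norm_nonneg _) h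

namespace IsInert

variable {α β : K}

lemma norm_eval_eq_one (h : IsInert α β) {x : K} (hx : ‖x‖ ≤ 1) :
    ‖x ^ 2 - β * x - α‖ = 1 := by
  refine le_antisymm ?_ (h.one_le_norm_eval x hx)
  refine (IsUltrametricDist.norm_sub_le_max _ _).trans (max_le ?_ h.norm_eq_one.le)
  refine (IsUltrametricDist.norm_sub_le_max _ _).trans (max_le ?_ ?_)
  · rw [norm_pow]; exact pow_le_one₀ (norm_nonneg _) hx
  · rw [norm_mul]; exact mul_le_one₀ h.norm_le_one (norm_nonneg _) hx

lemma norm_normForm (h : IsInert α β) (a c : K) :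
    ‖a ^ 2 + a * β * c - c ^ 2 * α‖ = max ‖a‖ ‖c‖ ^ 2 := by
  rcases le_or_gt ‖a‖ ‖c‖ with hac | hca
  · rcases eq_or_ne c 0 with rfl | hc
    · simp_all
    have hx : ‖-(a / c)‖ ≤ 1 := by
      rw [norm_neg, norm_div]; exact div_le_one_of_le₀ hac (norm_nonneg c)
    have key : a ^ 2 + a * β * c - c ^ 2 * α = c ^ 2 * ((-(a / c)) ^ 2 - β * -(a / c) - α) := by
      field_simp; ring
    rw [key, norm_mul, norm_pow, h.norm_eval_eq_one hx, mul_one, max_eq_right hac]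
  · have ha : a ≠ 0 := norm_pos_iff.1 ((norm_nonneg c).trans_lt hca)
    have hca' : ‖c / a‖ < 1 := by rw [norm_div]; exact (div_lt_one (norm_pos_iff.2 ha)).2 hca
    have hz : ‖β * (c / a) - α * (c / a) ^ 2‖ < 1 := by
      refine (IsUltrametricDist.norm_sub_le_max _ _).trans_lt (max_lt ?_ ?_)
      · rw [norm_mul]; exact (mul_le_of_le_one_left (norm_nonneg _) h.norm_le_one).trans_lt hca'
      · rw [norm_mul, norm_pow, h.norm_eq_one, one_mul]
        exact (pow_le_of_le_one (norm_nonneg _) hca'.le two_ne_zero).trans_lt hca'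
    have key : a ^ 2 + a * β * c - c ^ 2 * α =
        a ^ 2 * (1 + (β * (c / a) - α * (c / a) ^ 2)) := by
      field_simp; ring
    have hone : ‖1 + (β * (c / a) - α * (c / a) ^ 2)‖ = 1 := by
      rw [IsUltrametricDist.norm_add_eq_max_of_norm_ne_norm (by rw [norm_one]; exact hz.ne'),
        norm_one, max_eq_left hz.le]
    rw [key, norm_mul, norm_pow, hone, mul_one, max_eq_left hca.le]

lemma normForm_ne_zero (h : IsInert α β) {a c : K} (hac : ¬(a = 0 ∧ c = 0)) :
    a ^ 2 + a * β * c - c ^ 2 * α ≠ 0 := by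
  intro hN
  have hmax := h.norm_normForm a c
  rw [hN, norm_zero, eq_comm, pow_eq_zero_iff two_ne_zero] at hmax
  exact hac ⟨norm_le_zero_iff.1 (hmax ▸ le_max_left _ _),
    norm_le_zero_iff.1 (hmax ▸ le_max_right _ _)⟩

end IsInert

end Ultrametric

section Torus

variable {F : Type*} [Field F]

/-- The element `a + c Δ` of `F[Δ]`, where `Δ = !![0, α; 1, β]`. -/
def torusMat (α β a c : F) : Matrix (Fin 2) (Fin 2) F := !![a, c * α; c, a + c * β]

def torus (α β : F) : Set (Matrix (Fin 2) (Fin 2) F) :=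
  {t | IsUnit t ∧ t * !![0, α; 1, β] = !![0, α; 1, β] * t}

variable {α β : F}

lemma det_torusMat (a c : F) :
    (torusMat α β a c).det = a ^ 2 + a * β * c - c ^ 2 * α := by
  rw [torusMat, det_fin_two_of]; ring

lemma torusMat_mem_torus {a c : F} (h : a ^ 2 + a * β * c - c ^ 2 * α ≠ 0) :
    torusMat α β a c ∈ torus α β := by
  refine ⟨(isUnit_iff_isUnit_det _).2 (det_torusMat (α := α) (β := β) a c ▸ h.isUnit), ?_⟩
  simp only [torusMat, mul_fin_two]
  congr 1; ring_nf

lemma eq_torusMat_of_mem_torus (hα : α ≠ 0) {t : Matrix (Fin 2) (Fin 2) F}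
    (ht : t ∈ torus α β) : t = torusMat α β (t 0 0) (t 1 0) := by
  have h00 := congrFun (congrFun ht.2 0) 0
  have h01 := congrFun (congrFun ht.2 0) 1
  simp [mul_apply, Fin.sum_univ_two] at h00 h01
  have h11 : t 1 1 = t 0 0 + t 1 0 * β :=
    mul_left_cancel₀ hα (by linear_combination -h01 + β * h00)
  rw [eta_fin_two t, torusMat]
  simp [h00, h11, mul_comm]

lemma one_mem_torus : (1 : Matrix (Fin 2) (Fin 2) F) ∈ torus α β :=
  ⟨isUnit_one, by rw [Matrix.one_mul, Matrix.mul_one]⟩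

lemma mul_mem_torus {s t : Matrix (Fin 2) (Fin 2) F} (hs : s ∈ torus α β)
    (ht : t ∈ torus α β) : s * t ∈ torus α β :=
  ⟨hs.1.mul ht.1, by rw [Matrix.mul_assoc, ht.2, ← Matrix.mul_assoc, hs.2, Matrix.mul_assoc]⟩

end Torus

namespace IsInert

variable {K : Type*} [NormedField K] [IsUltrametricDist K] {α β : K}

lemma norm_torusMat (h : IsInert α β) (a c : K) : ‖torusMat α β a c‖ = max ‖a‖ ‖c‖ := by
  have hcα : ‖c * α‖ = ‖c‖ := by rw [norm_mul, h.norm_eq_one, mul_one]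
  have hd : ‖a + c * β‖ ≤ max ‖a‖ ‖c‖ := by
    refine (IsUltrametricDist.norm_add_le_max _ _).trans (max_le_max le_rfl ?_)
    rw [norm_mul]; exact mul_le_of_le_one_right (norm_nonneg _) h.norm_le_one
  rw [torusMat, norm_fin_two, hcα]
  exact le_antisymm
    (max_le (max_le (le_max_left _ _) (le_max_right _ _)) (max_le (le_max_right _ _) hd))
    (max_le ((le_max_left _ _).trans (le_max_left _ _))
      ((le_max_left _ _).trans (le_max_right _ _)))

lemma norm_det_of_mem_torus (h : IsInert α β) {t : Matrix (Fin 2) (Fin 2) K}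
    (ht : t ∈ torus α β) : ‖t.det‖ = ‖t‖ ^ 2 := by
  rw [eq_torusMat_of_mem_torus h.ne_zero ht, det_torusMat, norm_torusMat h, norm_normForm h]

lemma norm_mul_of_mem_torus (h : IsInert α β) {t : Matrix (Fin 2) (Fin 2) K}
    (ht : t ∈ torus α β) (B : Matrix (Fin 2) (Fin 2) K) : ‖t * B‖ = ‖t‖ * ‖B‖ := by
  refine norm_mul_eq_of_norm_mul_norm_inv_le_one ht.1 ?_ B
  rw [norm_inv_fin_two, h.norm_det_of_mem_torus ht]
  rcases eq_or_ne ‖t‖ 0 with h0 | h0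
  · simp [h0]
  · rw [← mul_div_assoc, ← sq, div_self (pow_ne_zero 2 h0)]

end IsInert

section Iwahori

variable {p : ℕ} [Fact p.Prime]

lemma norm_le_one_of_mem_Kp {k : Matrix (Fin 2) (Fin 2) ℚ_[p]} (hk : k ∈ Kp p) : ‖k‖ ≤ 1 :=
  (norm_le_iff zero_le_one).2 fun i j => (hk.2 i j).1

lemma norm_inv_le_one_of_mem_Kp {k : Matrix (Fin 2) (Fin 2) ℚ_[p]} (hk : k ∈ Kp p) :
    ‖k⁻¹‖ ≤ 1 :=
  (norm_le_iff zero_le_one).2 fun i j => (hk.2 i j).2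

lemma norm_mul_of_mem_Kp (B : Matrix (Fin 2) (Fin 2) ℚ_[p]) {k : Matrix (Fin 2) (Fin 2) ℚ_[p]}
    (hk : k ∈ Kp p) : ‖B * k‖ = ‖B‖ := by
  refine le_antisymm ((norm_mul_le_of_ultrametric B k).trans
    (mul_le_of_le_one_right (norm_nonneg _) (norm_le_one_of_mem_Kp hk))) ?_
  calc ‖B‖ = ‖B * k * k⁻¹‖ := by
        rw [Matrix.mul_assoc, mul_nonsing_inv _ ((isUnit_iff_isUnit_det k).1 hk.1),
          Matrix.mul_one]
    _ ≤ ‖B * k‖ * ‖k⁻¹‖ := norm_mul_le_of_ultrametric _ _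
    _ ≤ ‖B * k‖ := mul_le_of_le_one_right (norm_nonneg _) (norm_inv_le_one_of_mem_Kp hk)

lemma norm_det_of_mem_Kp {k : Matrix (Fin 2) (Fin 2) ℚ_[p]} (hk : k ∈ Kp p) : ‖k.det‖ = 1 := by
  have hle : ∀ A : Matrix (Fin 2) (Fin 2) ℚ_[p], ‖A‖ ≤ 1 → ‖A.det‖ ≤ 1 := fun A hA =>
    (norm_det_fin_two_le A).trans (pow_le_one₀ (norm_nonneg _) hA)
  have hinv := hle _ (norm_inv_le_one_of_mem_Kp hk)
  rw [det_nonsing_inv, Ring.inverse_eq_inv', norm_inv] at hinv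
  exact le_antisymm (hle k (norm_le_one_of_mem_Kp hk))
    ((inv_le_one₀ (norm_pos_iff.2 ((isUnit_iff_isUnit_det k).1 hk.1).ne_zero)).1 hinv)

lemma mem_Kp_of_norm_le_one {A : Matrix (Fin 2) (Fin 2) ℚ_[p]} (hA : ‖A‖ ≤ 1)
    (hdet : ‖A.det‖ = 1) : A ∈ Kp p := by
  have hinv : ‖A⁻¹‖ ≤ 1 := by rw [norm_inv_fin_two, hdet, div_one]; exact hA
  refine ⟨(isUnit_iff_isUnit_det A).2 (norm_ne_zero_iff.1 (hdet ▸ one_ne_zero)).isUnit,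
    fun i j => ⟨(norm_entry_le_entrywise_sup_norm A).trans hA,
      (norm_entry_le_entrywise_sup_norm _).trans hinv⟩⟩

lemma mul_mem_Kp {k l : Matrix (Fin 2) (Fin 2) ℚ_[p]} (hk : k ∈ Kp p) (hl : l ∈ Kp p) :
    k * l ∈ Kp p :=
  mem_Kp_of_norm_le_one (by rw [norm_mul_of_mem_Kp k hl]; exact norm_le_one_of_mem_Kp hk)
    (by rw [det_mul, norm_mul, norm_det_of_mem_Kp hk, norm_det_of_mem_Kp hl, mul_one])

lemma mul_mem_Ip {k l : Matrix (Fin 2) (Fin 2) ℚ_[p]} (hk : k ∈ Ip p) (hl : l ∈ Ip p) :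
    k * l ∈ Ip p := by
  refine ⟨mul_mem_Kp hk.1 hl.1, ?_⟩
  rw [mul_apply, Fin.sum_univ_two]
  refine (IsUltrametricDist.norm_add_le_max _ _).trans_lt (max_lt ?_ ?_) <;> rw [norm_mul]
  · exact (mul_le_of_le_one_right (norm_nonneg _) (hl.1.2 0 0).1).trans_lt hk.2
  · exact (mul_le_of_le_one_left (norm_nonneg _) (hk.1.2 1 1).1).trans_lt hl.2

lemma mem_Ip_of_fin_two {a b c d : ℚ_[p]} (ha : ‖a‖ ≤ 1) (hb : ‖b‖ ≤ 1) (hc : ‖c‖ < 1)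
    (hd : ‖d‖ ≤ 1) (hdet : ‖a * d - b * c‖ = 1) : !![a, b; c, d] ∈ Ip p := by
  refine ⟨mem_Kp_of_norm_le_one ?_ (by rwa [det_fin_two_of]), by simpa using hc⟩
  rw [norm_fin_two]
  exact max_le (max_le ha hb) (max_le hc.le hd)

lemma one_mem_Ip : (1 : Matrix (Fin 2) (Fin 2) ℚ_[p]) ∈ Ip p := by
  rw [one_fin_two]
  exact mem_Ip_of_fin_two (by simp) (by simp) (by simp) (by simp) (by simp)

lemma exists_mem_Kp_mul_dMat_one_eq {k : Matrix (Fin 2) (Fin 2) ℚ_[p]} (hk : k ∈ Ip p) :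
    ∃ k' ∈ Kp p, k * dMat p 1 = dMat p 1 * k' := by
  have hp : (p : ℚ_[p]) ≠ 0 := Nat.cast_ne_zero.2 (Fact.out : p.Prime).ne_zero
  have h10 : ‖k 1 0 / p‖ ≤ 1 := by
    rw [norm_div, div_le_one (norm_pos_iff.2 hp), Padic.norm_p, ← _root_.zpow_neg_one,
      Padic.norm_le_pow_iff_norm_lt_pow_add_one]
    simpa using hk.2
  have hk1 := (hk.1.2 · · |>.1)
  refine ⟨!![k 0 0, p * k 0 1; k 1 0 / p, k 1 1], mem_Kp_of_norm_le_one ?_ ?_, ?_⟩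
  · rw [norm_fin_two, norm_mul]
    exact max_le (max_le (hk1 0 0) (mul_le_one₀ (IsUltrametricDist.norm_natCast_le_one ℚ_[p] p)
      (norm_nonneg _) (hk1 0 1))) (max_le h10 (hk1 1 1))
  · rw [← norm_det_of_mem_Kp hk.1, det_fin_two_of, det_fin_two]
    field_simp
  · rw [eta_fin_two k, dMat]
    simp only [mul_fin_two]
    simp [mul_comm]
    field_simp

end Iwahori

section Representatives

variable {p : ℕ} [Fact p.Prime]

lemma rep18_inr (j : {j : ℕ // 1 ≤ j}) :
    rep18 p (Sum.inr j) = !![0, 1; (p : ℚ_[p]) ^ (j : ℕ), 0] := by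
  simp [rep18, dMat]

lemma norm_p_pow_le_one (j : ℕ) : ‖(p : ℚ_[p]) ^ j‖ ≤ 1 := by
  rw [norm_pow]
  exact pow_le_one₀ (norm_nonneg _) (IsUltrametricDist.norm_natCast_le_one ℚ_[p] p)

lemma Padic.exists_eq_pow_mul_of_norm_le_one {y : ℚ_[p]} (hy0 : y ≠ 0) (hy : ‖y‖ ≤ 1) :
    ∃ n : ℕ, ∃ u : ℚ_[p], ‖u‖ = 1 ∧ y = p ^ n * u := by
  set z : ℤ_[p] := ⟨y, hy⟩
  have hz : z ≠ 0 := fun h => hy0 (congrArg Subtype.val h)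
  refine ⟨z.valuation, PadicInt.unitCoeff hz, PadicInt.norm_units _, ?_⟩
  have := congrArg ((↑) : ℤ_[p] → ℚ_[p]) (PadicInt.unitCoeff_spec hz)
  push_cast at this
  rw [mul_comm]
  exact this

lemma norm_rep18 (c : ℕ ⊕ {j : ℕ // 1 ≤ j}) : ‖rep18 p c‖ = 1 := by
  rcases c with j | j
  · simpa [rep18, dMat, norm_fin_two] using norm_p_pow_le_one (p := p) j
  · simpa [rep18_inr, norm_fin_two] using norm_p_pow_le_one (p := p) j

lemma norm_det_rep18 (c : ℕ ⊕ {j : ℕ // 1 ≤ j}) :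
    ‖(rep18 p c).det‖ = ‖(p : ℚ_[p])‖ ^ Sum.elim id Subtype.val c := by
  rcases c with j | j
  · simp [rep18, dMat]
  · simp [rep18_inr]

lemma norm_rep18_mul_dMat_one (c : ℕ ⊕ {j : ℕ // 1 ≤ j}) :
    ‖rep18 p c * dMat p 1‖ = Sum.elim (fun _ => 1) (fun _ => ‖(p : ℚ_[p])‖) c := by
  rcases c with j | ⟨j, hj⟩
  · simpa [rep18, dMat, mul_fin_two, norm_fin_two, ← pow_succ] using
      norm_p_pow_le_one (p := p) (j + 1)
  · rw [rep18_inr, dMat, mul_fin_two, norm_fin_two]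
    simp only [mul_zero, zero_mul, add_zero, zero_add, one_mul, mul_one, pow_one, norm_zero,
      Sum.elim_inr]
    rw [max_eq_right (norm_nonneg _), max_eq_left (norm_nonneg _), max_eq_left]
    rw [norm_pow]
    exact pow_le_of_le_one (norm_nonneg _) Padic.norm_p_lt_one.le (by omega)

lemma rep18_eq_of_norms {c c' : ℕ ⊕ {j : ℕ // 1 ≤ j}}
    (hdet : ‖(rep18 p c).det‖ = ‖(rep18 p c').det‖)
    (htwist : ‖rep18 p c * dMat p 1‖ = ‖rep18 p c' * dMat p 1‖) : c = c' := by
  have hp : 0 < ‖(p : ℚ_[p])‖ := norm_pos_iff.2 (Nat.cast_ne_zero.2 (Fact.out : p.Prime).ne_zero)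
  have hexp := (pow_right_strictAnti₀ hp Padic.norm_p_lt_one).injective
  rw [norm_det_rep18, norm_det_rep18] at hdet
  rw [norm_rep18_mul_dMat_one, norm_rep18_mul_dMat_one] at htwist
  rcases c with j | j <;> rcases c' with j' | j'
  · exact congrArg Sum.inl (hexp hdet)
  · exact absurd htwist.symm Padic.norm_p_lt_one.ne
  · exact absurd htwist Padic.norm_p_lt_one.ne
  · exact congrArg Sum.inr (Subtype.ext (hexp hdet))

end Representatives

section DoubleCosets

variable {p : ℕ} [Fact p.Prime] {α β : ℚ_[p]}

lemma mem_doubleCoset_trans {g h r : Matrix (Fin 2) (Fin 2) ℚ_[p]}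
    (hg : g ∈ doubleCoset h (torus α β) (Ip p)) (hh : h ∈ doubleCoset r (torus α β) (Ip p)) :
    g ∈ doubleCoset r (torus α β) (Ip p) := by
  obtain ⟨t, ht, k, hk, rfl⟩ := mem_doubleCoset.1 hg
  obtain ⟨t', ht', k', hk', rfl⟩ := mem_doubleCoset.1 hh
  exact mem_doubleCoset.2 ⟨t * t', mul_mem_torus ht ht', k' * k, mul_mem_Ip hk' hk,
    by simp only [Matrix.mul_assoc]⟩

namespace IsInert

lemma norms_of_mem_doubleCoset (h : IsInert α β) {g r : Matrix (Fin 2) (Fin 2) ℚ_[p]}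
    (hr : ‖r‖ = 1) (hg : g ∈ doubleCoset r (torus α β) (Ip p)) :
    ‖g.det‖ = ‖g‖ ^ 2 * ‖r.det‖ ∧ ‖g * dMat p 1‖ = ‖g‖ * ‖r * dMat p 1‖ := by
  obtain ⟨t, ht, k, hk, rfl⟩ := mem_doubleCoset.1 hg
  obtain ⟨k', hk', hkk'⟩ := exists_mem_Kp_mul_dMat_one_eq hk
  have hnorm : ‖t * r * k‖ = ‖t‖ := by
    rw [norm_mul_of_mem_Kp _ hk.1, h.norm_mul_of_mem_torus ht, hr, mul_one]
  rw [hnorm]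
  constructor
  · rw [det_mul, det_mul, norm_mul, norm_mul, h.norm_det_of_mem_torus ht,
      norm_det_of_mem_Kp hk.1, mul_one]
  · rw [Matrix.mul_assoc, Matrix.mul_assoc, hkk', ← Matrix.mul_assoc r,
      h.norm_mul_of_mem_torus ht, norm_mul_of_mem_Kp _ hk']

lemma eq_of_mem_doubleCoset_rep18 (h : IsInert α β) {g : Matrix (Fin 2) (Fin 2) ℚ_[p]}
    (hg : g ≠ 0) {c c' : ℕ ⊕ {j : ℕ // 1 ≤ j}}
    (hc : g ∈ doubleCoset (rep18 p c) (torus α β) (Ip p))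
    (hc' : g ∈ doubleCoset (rep18 p c') (torus α β) (Ip p)) : c = c' := by
  obtain ⟨hdet, htwist⟩ := h.norms_of_mem_doubleCoset (norm_rep18 c) hc
  obtain ⟨hdet', htwist'⟩ := h.norms_of_mem_doubleCoset (norm_rep18 c') hc'
  have hg0 : 0 < ‖g‖ := norm_pos_iff.2 hg
  exact rep18_eq_of_norms (mul_left_cancel₀ (pow_pos hg0 2).ne' (hdet.symm.trans hdet'))
    (mul_left_cancel₀ hg0.ne' (htwist.symm.trans htwist'))

lemma exists_mem_doubleCoset_upper (h : IsInert α β) {g : Matrix (Fin 2) (Fin 2) ℚ_[p]}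
    (hg : IsUnit g) :
    ∃ x y : ℚ_[p], y ≠ 0 ∧ g ∈ doubleCoset !![1, x; 0, y] (torus α β) (Ip p) := by
  obtain ⟨a, b, c, d, rfl⟩ : ∃ a b c d, g = !![a, b; c, d] := ⟨_, _, _, _, eta_fin_two g⟩
  have hdet : a * d - b * c ≠ 0 := by
    simpa [det_fin_two_of] using ((isUnit_iff_isUnit_det _).1 hg).ne_zero
  set N := a ^ 2 + a * β * c - c ^ 2 * α with hNdef
  have hN : N ≠ 0 := h.normForm_ne_zero fun ⟨ha, hc⟩ => hdet (by rw [ha, hc]; ring)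
  -- `(x, y)` is `(a + cΔ)⁻¹ (b, d)`, computed with the adjugate
  refine ⟨((a + c * β) * b - c * α * d) / N, (a * d - b * c) / N, div_ne_zero hdet hN,
    mem_doubleCoset.2 ⟨torusMat α β a c, torusMat_mem_torus hN, 1, one_mem_Ip, ?_⟩⟩
  simp [torusMat]
  constructor
  · field_simp
    rw [hNdef]
    ring
  · field_simp
    rw [hNdef]
    ring

lemma exists_upper_mem_doubleCoset_diag_or_antidiag (h : IsInert α β) (x : ℚ_[p]) {y : ℚ_[p]}
    (hy : y ≠ 0) :
    ∃ z ≠ 0, !![1, x; 0, y] ∈ doubleCoset !![1, 0; 0, z] (torus α β) (Ip p) ∨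
      !![1, x; 0, y] ∈ doubleCoset !![0, 1; z, 0] (torus α β) (Ip p) := by
  by_cases hx : ‖x‖ ≤ 1
  · refine ⟨y, hy, Or.inl (mem_doubleCoset.2 ⟨1, one_mem_torus, !![1, x; 0, 1],
      mem_Ip_of_fin_two (by simp) hx (by simp) (by simp) (by simp), by simp⟩)⟩
  push Not at hx
  set N := x ^ 2 + x * β * y - y ^ 2 * α with hNdef
  have hmax : 1 < max ‖x‖ ‖y‖ := hx.trans_le (le_max_left _ _)
  have hNnorm : ‖N‖ = max ‖x‖ ‖y‖ ^ 2 := h.norm_normForm x y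
  have hN : N ≠ 0 := norm_ne_zero_iff.1 (by rw [hNnorm]; positivity)
  have hlower : ‖(x + y * β) / N‖ < 1 := by
    rw [norm_div, hNnorm, div_lt_one (by positivity)]
    calc ‖x + y * β‖ ≤ max ‖x‖ ‖y‖ := (IsUltrametricDist.norm_add_le_max _ _).trans
          (max_le_max le_rfl (by
            rw [norm_mul]; exact mul_le_of_le_one_right (norm_nonneg _) h.norm_le_one))
      _ < max ‖x‖ ‖y‖ ^ 2 := by nlinarith
  -- `((x + yβ) / N, -y / N)` is the first column of `(x + yΔ)⁻¹`
  refine ⟨-y / N, div_ne_zero (neg_ne_zero.2 hy) hN, Or.inr (mem_doubleCoset.2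
    ⟨torusMat α β x y, torusMat_mem_torus hN, !![1, 0; (x + y * β) / N, 1],
      mem_Ip_of_fin_two (by simp) (by simp) hlower (by simp) (by simp), ?_⟩)⟩
  simp [torusMat]
  constructor
  · field_simp
    rw [hNdef]
    ring
  · field_simp
    ring

lemma diag_mem_doubleCoset_antidiag (h : IsInert α β) {y : ℚ_[p]} (hy : 1 < ‖y‖) :
    !![1, 0; 0, y] ∈ doubleCoset !![0, 1; y⁻¹, 0] (torus α β) (Ip p) := by
  have hy0 : y ≠ 0 := norm_pos_iff.1 (one_pos.trans hy)
  have hα := h.ne_zero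
  refine mem_doubleCoset.2 ⟨torusMat α β 0 y, torusMat_mem_torus (by simpa using ⟨hy0, hα⟩),
    !![α⁻¹, 0; -(β / (α * y)), 1], mem_Ip_of_fin_two ?_ (by simp) ?_ (by simp) ?_, ?_⟩
  · rw [norm_inv, h.norm_eq_one, inv_one]
  · rw [norm_neg, norm_div, norm_mul, h.norm_eq_one, one_mul]
    exact (div_lt_one (norm_pos_iff.2 hy0)).2 (h.norm_le_one.trans_lt hy)
  · simp [h.norm_eq_one]
  · simp [torusMat]
    constructor
    · field_simp
    · field_simp
      ring

lemma antidiag_mem_doubleCoset_diag (h : IsInert α β) {y : ℚ_[p]} (hy : 1 ≤ ‖y‖) :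
    !![0, 1; y, 0] ∈ doubleCoset !![1, 0; 0, y⁻¹] (torus α β) (Ip p) := by
  have hy0 : y ≠ 0 := norm_pos_iff.1 (one_pos.trans_le hy)
  have hα := h.ne_zero
  refine mem_doubleCoset.2 ⟨torusMat α β 0 y, torusMat_mem_torus (by simpa using ⟨hy0, hα⟩),
    !![1, -(β / (α * y)); 0, α⁻¹], mem_Ip_of_fin_two (by simp) ?_ (by simp) ?_ ?_, ?_⟩
  · rw [norm_neg, norm_div, norm_mul, h.norm_eq_one, one_mul]
    exact div_le_one_of_le₀ (h.norm_le_one.trans hy) (norm_nonneg _)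
  · rw [norm_inv, h.norm_eq_one, inv_one]
  · simp [h.norm_eq_one]
  · simp [torusMat]
    constructor
    · field_simp
    · field_simp
      ring

end IsInert

lemma exists_diag_mem_doubleCoset_rep18 {y : ℚ_[p]} (hy0 : y ≠ 0) (hy : ‖y‖ ≤ 1) :
    ∃ c, !![1, 0; 0, y] ∈ doubleCoset (rep18 p c) (torus α β) (Ip p) := by
  obtain ⟨n, u, hu, rfl⟩ := Padic.exists_eq_pow_mul_of_norm_le_one hy0 hy
  exact ⟨Sum.inl n, mem_doubleCoset.2 ⟨1, one_mem_torus, !![1, 0; 0, u],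
    mem_Ip_of_fin_two (by simp) (by simp) (by simp) hu.le (by simpa using hu),
    by simp [rep18, dMat]⟩⟩

lemma exists_antidiag_mem_doubleCoset_rep18 {y : ℚ_[p]} (hy0 : y ≠ 0) (hy : ‖y‖ < 1) :
    ∃ c, !![0, 1; y, 0] ∈ doubleCoset (rep18 p c) (torus α β) (Ip p) := by
  obtain ⟨n, u, hu, rfl⟩ := Padic.exists_eq_pow_mul_of_norm_le_one hy0 hy.le
  have hn : 1 ≤ n := Nat.one_le_iff_ne_zero.2 fun hn => by simp [hn, hu] at hy
  exact ⟨Sum.inr ⟨n, hn⟩, mem_doubleCoset.2 ⟨1, one_mem_torus, !![u, 0; 0, 1],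
    mem_Ip_of_fin_two hu.le (by simp) (by simp) (by simp) (by simpa using hu),
    by simp [rep18_inr]⟩⟩

lemma IsInert.exists_mem_doubleCoset_rep18 (h : IsInert α β)
    {g : Matrix (Fin 2) (Fin 2) ℚ_[p]} (hg : IsUnit g) :
    ∃ c, g ∈ doubleCoset (rep18 p c) (torus α β) (Ip p) := by
  obtain ⟨x, y, hy, hg⟩ := h.exists_mem_doubleCoset_upper hg
  obtain ⟨z, hz, hD | hA⟩ := h.exists_upper_mem_doubleCoset_diag_or_antidiag x hy
  · rcases le_or_gt ‖z‖ 1 with hz1 | hz1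
    · obtain ⟨c, hc⟩ := exists_diag_mem_doubleCoset_rep18 hz hz1
      exact ⟨c, mem_doubleCoset_trans hg (mem_doubleCoset_trans hD hc)⟩
    · obtain ⟨c, hc⟩ := exists_antidiag_mem_doubleCoset_rep18 (inv_ne_zero hz)
        (by rw [norm_inv]; exact inv_lt_one_of_one_lt₀ hz1)
      exact ⟨c, mem_doubleCoset_trans hg (mem_doubleCoset_trans hD
        (mem_doubleCoset_trans (h.diag_mem_doubleCoset_antidiag hz1) hc))⟩
  · rcases lt_or_ge ‖z‖ 1 with hz1 | hz1
    · obtain ⟨c, hc⟩ := exists_antidiag_mem_doubleCoset_rep18 hz hz1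
      exact ⟨c, mem_doubleCoset_trans hg (mem_doubleCoset_trans hA hc)⟩
    · obtain ⟨c, hc⟩ := exists_diag_mem_doubleCoset_rep18 (inv_ne_zero hz)
        (by rw [norm_inv]; exact inv_le_one_of_one_le₀ hz1)
      exact ⟨c, mem_doubleCoset_trans hg (mem_doubleCoset_trans hA
        (mem_doubleCoset_trans (h.antidiag_mem_doubleCoset_diag hz1) hc))⟩

end DoubleCosets

/-- In the inert case, the double cosets `T_Δ d_j I_p` (j ≥ 0) and `T_Δ d_j w I_p` (j ≥ 1)
are pairwise disjoint with union `GL₂(ℚ_p)`, where `T_Δ` is the centralizer of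
`Δ = [[0, α], [1, β]]`. -/
theorem stmt18 (p : ℕ) [Fact (Nat.Prime p)] (α β : ℚ_[p])
    (hα : ‖α‖ = 1) (hβ : ‖β‖ ≤ 1)
    (hirr : ∀ x : ℚ_[p], ‖x‖ ≤ 1 → 1 ≤ ‖x^2 - β * x - α‖)
    (g : Matrix (Fin 2) (Fin 2) ℚ_[p]) (hg : IsUnit g) :
    ∃! c : ℕ ⊕ {j : ℕ // 1 ≤ j}, ∃ t k : Matrix (Fin 2) (Fin 2) ℚ_[p],
      (IsUnit t ∧ t * !![0, α; 1, β] = !![0, α; 1, β] * t) ∧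
      k ∈ Ip p ∧ g = t * rep18 p c * k := by
  have h : IsInert α β := ⟨hα, hβ, hirr⟩
  obtain ⟨c, hc⟩ := h.exists_mem_doubleCoset_rep18 hg
  refine ⟨c, ?_, fun c' ⟨t, k, ht, hk, hg'⟩ => ?_⟩
  · obtain ⟨t, ht, k, hk, hgc⟩ := mem_doubleCoset.1 hc
    exact ⟨t, k, ht, hk, hgc⟩
  · exact h.eq_of_mem_doubleCoset_rep18 hg.ne_zero (mem_doubleCoset.2 ⟨t, ht, k, hk, hg'⟩) hc
end
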